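/- arXiv:1906.09891 — 7 statements merged into one kernel-verified Lean document; each statement's English description precedes it below -/
import Mathlib

section
/- For every b ∈ ℝ^I the market clearing problem — minimize (1/I)∑_i λ_i² over λ ∈ ℝ^I subject to ∑_i(−aλ_i + b_i) = 0 and −F_l ≤ ∑_i π_{il}(−aλ_i + b_i) ≤ F_l for all l — has a unique optimal solution λ(b), and λ(b) = (b − P_Y(b))/a, where P_Y is the Euclidean projection onto Y := {y ∈ ℝ^I : ∑_i y_i = 0 and −F_l ≤ ∑_i π_{il} y_i ≤ F_l for all l}. Equivalently, λ is optimal for the clearing problem if and only if the vector y with y_i = −aλ_i + b_i is the Euclidean projection of b onto Y. -/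
open Finset

noncomputable section

/-- Feasible set of cleared quantities: balance plus line flow limits. -/
def Ysh (I L : ℕ) (ptdf : Fin I → Fin L → ℝ) (F : Fin L → ℝ) : Set (Fin I → ℝ) :=
  {y | ∑ i, y i = 0 ∧ ∀ l, |∑ i, ptdf i l * y i| ≤ F l}

/-- `y` is the Euclidean projection of `b` onto `Ysh I L ptdf F`. -/
def IsProj (I L : ℕ) (ptdf : Fin I → Fin L → ℝ) (F : Fin L → ℝ)
    (b y : Fin I → ℝ) : Prop :=
  y ∈ Ysh I L ptdf F ∧
    ∀ z ∈ Ysh I L ptdf F, ∑ i, (b i - y i) ^ 2 ≤ ∑ i, (b i - z i) ^ 2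

/-- `lam` is feasible for the market clearing problem at bids `b`. -/
def ClearingFeas (I L : ℕ) (a : ℝ) (ptdf : Fin I → Fin L → ℝ) (F : Fin L → ℝ)
    (b lam : Fin I → ℝ) : Prop :=
  (∑ i, (-(a * lam i) + b i) = 0) ∧ ∀ l, |∑ i, ptdf i l * (-(a * lam i) + b i)| ≤ F l

/-- `lam` is an optimal solution of the market clearing problem
`min (1/I) ∑ i, lam i ^ 2` subject to feasibility. -/
def ClearingOpt (I L : ℕ) (a : ℝ) (ptdf : Fin I → Fin L → ℝ) (F : Fin L → ℝ)
    (b lam : Fin I → ℝ) : Prop :=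
  ClearingFeas I L a ptdf F b lam ∧
    ∀ lam', ClearingFeas I L a ptdf F b lam' →
      (1 / (I : ℝ)) * ∑ i, lam i ^ 2 ≤ (1 / (I : ℝ)) * ∑ i, lam' i ^ 2

lemma Ysh_midpoint {I L : ℕ} {ptdf : Fin I → Fin L → ℝ} {F : Fin L → ℝ}
    {y y' : Fin I → ℝ} (hy : y ∈ Ysh I L ptdf F) (hy' : y' ∈ Ysh I L ptdf F) :
    (fun i => (y i + y' i) / 2) ∈ Ysh I L ptdf F := by
  obtain ⟨hy1, hy2⟩ := hy
  obtain ⟨hy'1, hy'2⟩ := hy'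
  constructor
  · have : ∑ i, (y i + y' i) / 2 = (∑ i, y i + ∑ i, y' i) / 2 := by
      rw [← Finset.sum_add_distrib, Finset.sum_div]
    simp [this, hy1, hy'1]
  · intro l
    have h1 : ∑ i, ptdf i l * ((y i + y' i) / 2)
        = ((∑ i, ptdf i l * y i) + ∑ i, ptdf i l * y' i) / 2 := by
      rw [eq_div_iff (by norm_num : (2:ℝ) ≠ 0), Finset.sum_mul, ← Finset.sum_add_distrib]
      apply Finset.sum_congr rfl
      intro i _; ring
    rw [h1]
    have h2 := abs_add_le (∑ i, ptdf i l * y i) (∑ i, ptdf i l * y' i)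
    have h3 : |((∑ i, ptdf i l * y i) + ∑ i, ptdf i l * y' i) / 2|
        = |(∑ i, ptdf i l * y i) + ∑ i, ptdf i l * y' i| / 2 := by
      rw [abs_div]; norm_num
    have := hy2 l; have := hy'2 l
    rw [h3]; linarith

lemma IsProj_unique {I L : ℕ} {ptdf : Fin I → Fin L → ℝ} {F : Fin L → ℝ}
    {b y y' : Fin I → ℝ} (hy : IsProj I L ptdf F b y) (hy' : IsProj I L ptdf F b y') :
    y = y' := by
  have hz := Ysh_midpoint hy.1 hy'.1
  have h1 := hy.2 _ hz
  have h2 := hy.2 y' hy'.1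
  have h3 := hy'.2 y hy.1
  have key : ∑ i, (b i - (y i + y' i) / 2) ^ 2
      = (∑ i, (b i - y i) ^ 2) / 2 + (∑ i, (b i - y' i) ^ 2) / 2
        - (∑ i, (y i - y' i) ^ 2) / 4 := by
    rw [Finset.sum_div, Finset.sum_div, Finset.sum_div, ← Finset.sum_add_distrib,
      ← Finset.sum_sub_distrib]
    apply Finset.sum_congr rfl
    intro i _; ring
  have hsum : ∑ i, (y i - y' i) ^ 2 ≤ 0 := by
    linarith
  have hzero : ∑ i, (y i - y' i) ^ 2 = 0 :=
    le_antisymm hsum (Finset.sum_nonneg fun i _ => sq_nonneg _)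
  funext i
  have := (Finset.sum_eq_zero_iff_of_nonneg (fun i _ => sq_nonneg (y i - y' i))).1 hzero
    i (Finset.mem_univ i)
  have := pow_eq_zero_iff (n := 2) (by norm_num) |>.1 this
  linarith [sub_eq_zero.1 this]

lemma clearing_feas_iff {I L : ℕ} {a : ℝ} {ptdf : Fin I → Fin L → ℝ} {F : Fin L → ℝ}
    {b lam : Fin I → ℝ} :
    ClearingFeas I L a ptdf F b lam ↔ (fun i => -(a * lam i) + b i) ∈ Ysh I L ptdf F :=
  Iff.rfl

lemma obj_eq {I : ℕ} {a : ℝ} {b lam : Fin I → ℝ} :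
    ∑ i, (b i - (-(a * lam i) + b i)) ^ 2 = a ^ 2 * ∑ i, lam i ^ 2 := by
  rw [Finset.mul_sum]
  apply Finset.sum_congr rfl
  intro i _; ring

lemma opt_iff {I L : ℕ} {a : ℝ} (ha : 0 < a) {ptdf : Fin I → Fin L → ℝ} {F : Fin L → ℝ}
    (hI : 1 ≤ I) {b lam : Fin I → ℝ} :
    ClearingOpt I L a ptdf F b lam ↔
      IsProj I L ptdf F b (fun i => -(a * lam i) + b i) := by
  have hIpos : (0 : ℝ) < 1 / (I : ℝ) := by
    have : (0 : ℝ) < (I : ℝ) := by exact_mod_cast hI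
    positivity
  have ha2 : (0 : ℝ) < a ^ 2 := by positivity
  constructor
  · rintro ⟨hfeas, hopt⟩
    refine ⟨clearing_feas_iff.1 hfeas, ?_⟩
    intro z hz
    set lam' : Fin I → ℝ := fun i => (b i - z i) / a with hlam'
    have hzy : (fun i => -(a * lam' i) + b i) = z := by
      funext i; simp only [hlam']; field_simp; ring
    have hfeas' : ClearingFeas I L a ptdf F b lam' := by
      rw [clearing_feas_iff, hzy]; exact hz
    have h := hopt lam' hfeas'
    have hle : ∑ i, lam i ^ 2 ≤ ∑ i, lam' i ^ 2 := le_of_mul_le_mul_left h hIpos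
    have e1 : ∑ i, (b i - (fun i => -(a * lam i) + b i) i) ^ 2 = a ^ 2 * ∑ i, lam i ^ 2 :=
      obj_eq
    have e2 : ∑ i, (b i - z i) ^ 2 = a ^ 2 * ∑ i, lam' i ^ 2 := by
      rw [← hzy]; exact obj_eq
    rw [e1, e2]
    exact mul_le_mul_of_nonneg_left hle (le_of_lt ha2)
  · rintro ⟨hmem, hproj⟩
    refine ⟨clearing_feas_iff.2 hmem, ?_⟩
    intro lam' hfeas'
    have h := hproj _ (clearing_feas_iff.1 hfeas')
    rw [obj_eq, obj_eq] at h
    have hle : ∑ i, lam i ^ 2 ≤ ∑ i, lam' i ^ 2 := le_of_mul_le_mul_left h ha2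
    exact mul_le_mul_of_nonneg_left hle (le_of_lt hIpos)

/-- For every bid profile `b` the market clearing problem has a unique optimal
solution, it equals `(b - P_Y b)/a`, and `lam` is optimal iff `y i = -a * lam i + b i` is the
Euclidean projection of `b` onto `Y`. -/
theorem stmt_2 (I L : ℕ) (hI : 1 ≤ I) (a : ℝ) (ha : 0 < a)
    (ptdf : Fin I → Fin L → ℝ) (F : Fin L → ℝ) (hF : ∀ l, 0 ≤ F l)
    (P : (Fin I → ℝ) → (Fin I → ℝ)) (hP : ∀ b, IsProj I L ptdf F b (P b))
    (b : Fin I → ℝ) :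
    (∃! lam, ClearingOpt I L a ptdf F b lam) ∧
    ClearingOpt I L a ptdf F b (fun i => (b i - P b i) / a) ∧
    (∀ lam, ClearingOpt I L a ptdf F b lam ↔
      IsProj I L ptdf F b (fun i => -(a * lam i) + b i)) := by
  have hiff : ∀ lam, ClearingOpt I L a ptdf F b lam ↔
      IsProj I L ptdf F b (fun i => -(a * lam i) + b i) := fun lam => opt_iff ha hI
  have hstar : ClearingOpt I L a ptdf F b (fun i => (b i - P b i) / a) := by
    rw [hiff]
    have : (fun i => -(a * ((b i - P b i) / a)) + b i) = P b := by
      funext i; field_simp; ring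
    rw [this]
    exact hP b
  refine ⟨⟨_, hstar, ?_⟩, hstar, hiff⟩
  intro lam hlam
  have h1 := (hiff lam).1 hlam
  have h2 := (hiff _).1 hstar
  have heq := IsProj_unique h1 h2
  funext i
  have := congrFun heq i
  have hane : a ≠ 0 := ne_of_gt ha
  field_simp at this
  field_simp
  linarith
end
end

section
/- Let I ≥ 2 and let Y := {y ∈ ℝ^I : ∑_i y_i = 0 and −F_l ≤ ∑_i π_{il} y_i ≤ F_l for all l} with F_l ≥ 0, and let P_Y denote Euclidean projection onto Y. Fix i, and let b, b' ∈ ℝ^I with b'_j = b_j for all j ≠ i and b'_i ≥ b_i. Then 0 ≤ (P_Y(b'))_i − (P_Y(b))_i ≤ ((I−1)/I)·(b'_i − b_i). -/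
/-!
Projection onto a convex set is firmly nonexpansive: with `d = P_Y b' - P_Y b`,
`‖d‖² ≤ ⟪b' - b, d⟫ = (b'ᵢ - bᵢ) dᵢ`. Balance gives `∑ d = 0`, so Cauchy–Schwarz on the other
`I - 1` coordinates yields `I dᵢ² ≤ (I - 1) ‖d‖²`. Together, `I dᵢ² ≤ (I - 1)(b'ᵢ - bᵢ) dᵢ`,
and `dᵢ² ≤ ‖d‖² ≤ (b'ᵢ - bᵢ) dᵢ` gives `dᵢ ≥ 0`.
-/


open Finset

noncomputable section

open scoped RealInnerProductSpace

section ConvexProjection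

variable {E : Type*} [NormedAddCommGroup E] [InnerProductSpace ℝ E] {K : Set E}

theorem IsMinOn.inner_sub_nonpos_of_convex (hK : Convex ℝ K) {b u : E} (hu : u ∈ K)
    (hmin : IsMinOn (fun w => ‖b - w‖) K u) {w : E} (hw : w ∈ K) : ⟪b - u, w - u⟫ ≤ 0 :=
  (norm_eq_iInf_iff_real_inner_le_zero hK hu).1 (hmin.iInf_eq hu).symm w hw

/-- Projections onto a convex set are firmly nonexpansive. -/
theorem norm_sub_sq_le_inner_of_isMinOn (hK : Convex ℝ K) {b b' u u' : E}
    (hu : u ∈ K) (hu' : u' ∈ K) (hmin : IsMinOn (fun w => ‖b - w‖) K u)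
    (hmin' : IsMinOn (fun w => ‖b' - w‖) K u') : ‖u' - u‖ ^ 2 ≤ ⟪b' - b, u' - u⟫ := by
  have h := hmin.inner_sub_nonpos_of_convex hK hu hu'
  have h' := hmin'.inner_sub_nonpos_of_convex hK hu' hu
  have hsplit : ⟪b' - b, u' - u⟫ = ‖u' - u‖ ^ 2 - ⟪b - u, u' - u⟫ - ⟪b' - u', u - u'⟫ := by
    rw [← real_inner_self_eq_norm_sq, ← neg_sub u' u, inner_neg_right]
    simp only [inner_sub_left]
    ring
  linarith

end ConvexProjection

section CenteredVector

variable {ι : Type*} [Fintype ι] [DecidableEq ι] {d : ι → ℝ}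

theorem card_mul_sq_le_of_sum_eq_zero (hd : ∑ j, d j = 0) (i : ι) :
    Fintype.card ι * d i ^ 2 ≤ (Fintype.card ι - 1) * ∑ j, d j ^ 2 := by
  have hrest : ∑ j ∈ univ.erase i, d j = -d i := by
    linarith [add_sum_erase univ d (mem_univ i)]
  have hcard : ((univ.erase i).card : ℝ) = Fintype.card ι - 1 := by
    rw [card_erase_of_mem (mem_univ i), Nat.cast_sub (card_pos.2 ⟨i, mem_univ i⟩), card_univ,
      Nat.cast_one]
  have hCS : d i ^ 2 ≤ (Fintype.card ι - 1) * ∑ j ∈ univ.erase i, d j ^ 2 := by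
    have := sq_sum_le_card_mul_sum_sq (s := univ.erase i) (f := d)
    rwa [hrest, hcard, neg_sq] at this
  rw [← add_sum_erase univ (fun j => d j ^ 2) (mem_univ i)]
  linarith

theorem nonneg_and_le_of_sum_sq_le_mul (hd : ∑ j, d j = 0) {δ : ℝ} (hδ : 0 ≤ δ) {i : ι}
    (h : ∑ j, d j ^ 2 ≤ δ * d i) :
    0 ≤ d i ∧ d i ≤ (Fintype.card ι - 1) / Fintype.card ι * δ := by
  have hn : (1 : ℝ) ≤ Fintype.card ι := Nat.one_le_cast.2 (Fintype.card_pos_iff.2 ⟨i⟩)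
  have hsq : d i ^ 2 ≤ δ * d i :=
    (single_le_sum (fun j _ => sq_nonneg (d j)) (mem_univ i)).trans h
  have hnonneg : 0 ≤ d i := by nlinarith [sq_nonneg (d i)]
  have key : d i * (Fintype.card ι * d i) ≤ d i * ((Fintype.card ι - 1) * δ) := by
    nlinarith [card_mul_sq_le_of_sum_eq_zero hd i, mul_le_mul_of_nonneg_left h (sub_nonneg.2 hn)]
  refine ⟨hnonneg, ?_⟩
  rw [div_mul_eq_mul_div, le_div_iff₀ (by linarith), mul_comm]
  rcases hnonneg.eq_or_lt with h0 | hpos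
  · rw [← h0, mul_zero]
    exact mul_nonneg (sub_nonneg.2 hn) hδ
  · exact le_of_mul_le_mul_left key hpos

end CenteredVector

section SharingMarket

variable {I L : ℕ} {ptdf : Fin I → Fin L → ℝ} {F : Fin L → ℝ}

theorem convex_Ysh : Convex ℝ (Ysh I L ptdf F) := by
  rintro y ⟨hy, hyF⟩ z ⟨hz, hzF⟩ a c ha hc hac
  refine ⟨?_, fun l => ?_⟩
  · simp [sum_add_distrib, ← mul_sum, hy, hz]
  · have hflow : ∑ j, ptdf j l * (a • y + c • z) j
        = a * ∑ j, ptdf j l * y j + c * ∑ j, ptdf j l * z j := by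
      simp only [Pi.add_apply, Pi.smul_apply, smul_eq_mul, mul_sum, ← sum_add_distrib]
      exact sum_congr rfl fun j _ => by ring
    rw [hflow]
    calc |a * ∑ j, ptdf j l * y j + c * ∑ j, ptdf j l * z j|
        ≤ |a * ∑ j, ptdf j l * y j| + |c * ∑ j, ptdf j l * z j| := abs_add_le _ _
      _ = a * |∑ j, ptdf j l * y j| + c * |∑ j, ptdf j l * z j| := by
          rw [abs_mul, abs_mul, abs_of_nonneg ha, abs_of_nonneg hc]
      _ ≤ a * F l + c * F l := by gcongr; exacts [hyF l, hzF l]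
      _ = F l := by rw [← add_mul, hac, one_mul]

/-- `Fin I → ℝ` carries the sup norm, so the Euclidean projection is read in `EuclideanSpace`. -/
theorem IsProj.isMinOn {b y : Fin I → ℝ} (h : IsProj I L ptdf F b y) :
    IsMinOn (fun w => ‖WithLp.toLp 2 b - w‖) (WithLp.ofLp ⁻¹' Ysh I L ptdf F)
      (WithLp.toLp 2 y : EuclideanSpace ℝ (Fin I)) := by
  refine isMinOn_iff.2 fun w hw => ?_
  rw [← sq_le_sq₀ (norm_nonneg _) (norm_nonneg _), EuclideanSpace.real_norm_sq_eq,
    EuclideanSpace.real_norm_sq_eq]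
  exact h.2 _ hw

theorem IsProj.sum_sq_sub_le {b b' u v : Fin I → ℝ} (hu : IsProj I L ptdf F b u)
    (hv : IsProj I L ptdf F b' v) :
    ∑ j, (v j - u j) ^ 2 ≤ ∑ j, (b' j - b j) * (v j - u j) := by
  have hK : Convex ℝ (WithLp.ofLp ⁻¹' Ysh I L ptdf F : Set (EuclideanSpace ℝ (Fin I))) :=
    convex_Ysh.linear_preimage (WithLp.linearEquiv 2 ℝ (Fin I → ℝ)).toLinearMap
  have := norm_sub_sq_le_inner_of_isMinOn hK hu.1 hv.1 hu.isMinOn hv.isMinOn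
  simpa [EuclideanSpace.real_norm_sq_eq, PiLp.inner_apply, mul_comm] using this

end SharingMarket

theorem stmt_3_general (I L : ℕ)
    (ptdf : Fin I → Fin L → ℝ) (F : Fin L → ℝ)
    (P : (Fin I → ℝ) → (Fin I → ℝ)) (hP : ∀ b, IsProj I L ptdf F b (P b))
    (i : Fin I) (b b' : Fin I → ℝ)
    (hoff : ∀ j, j ≠ i → b' j = b j) (hbi : b i ≤ b' i) :
    0 ≤ P b' i - P b i ∧
      P b' i - P b i ≤ ((I : ℝ) - 1) / (I : ℝ) * (b' i - b i) := by
  have hbalance : ∑ j, (P b' j - P b j) = 0 := by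
    rw [sum_sub_distrib, (hP b').1.1, (hP b).1.1, sub_zero]
  have hbid : ∑ j, (b' j - b j) * (P b' j - P b j) = (b' i - b i) * (P b' i - P b i) :=
    sum_eq_single i (fun j _ hj => by rw [hoff j hj, sub_self, zero_mul])
      (fun hi => absurd (mem_univ i) hi)
  have hfirm := (hP b).sum_sq_sub_le (hP b')
  simpa using nonneg_and_le_of_sum_sq_le_mul hbalance (sub_nonneg.2 hbi) (hfirm.trans_eq hbid)

/-- Sensitivity of the cleared quantity of prosumer `i` to its own bid:
if only `b i` increases, then `(P_Y b') i - (P_Y b) i` lies in `[0, ((I-1)/I) * (b' i - b i)]`. -/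
theorem stmt_3 (I L : ℕ) (hI : 2 ≤ I)
    (ptdf : Fin I → Fin L → ℝ) (F : Fin L → ℝ) (hF : ∀ l, 0 ≤ F l)
    (P : (Fin I → ℝ) → (Fin I → ℝ)) (hP : ∀ b, IsProj I L ptdf F b (P b))
    (i : Fin I) (b b' : Fin I → ℝ)
    (hoff : ∀ j, j ≠ i → b' j = b j) (hbi : b i ≤ b' i) :
    0 ≤ P b' i - P b i ∧
      P b' i - P b i ≤ ((I : ℝ) - 1) / (I : ℝ) * (b' i - b i) :=
  stmt_3_general I L ptdf F P hP i b b' hoff hbi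
end
end

section
/- Let I ≥ 2, let g_{ij} = g_{ji} ≥ 0 for i ≠ j and g_{i0} > 0 for each i ∈ {1,…,I}, and define the matrix B ∈ ℝ^{I×I} by B_{ii} = g_{i0} + ∑_{j≠i} g_{ij} and B_{ij} = −g_{ij} for i ≠ j. Then B is invertible, and for all indices n ≠ m there is no scalar π such that the constant row vector (π, π, …, π) satisfies (π,…,π)·B = e_nᵀ − e_mᵀ; equivalently, the vector (e_n − e_m)ᵀ B^{−1} is never a constant vector. -/
open Finset

section NodalAdmittance

variable {ι : Type*} [Fintype ι] [DecidableEq ι]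

/-- `g i j` is the conductance of the line between buses `i` and `j`, `g0 i` that of the
grounding of bus `i`; only the off-diagonal values of `g` enter. -/
noncomputable def nodalAdmittance (g : ι → ι → ℝ) (g0 : ι → ℝ) : Matrix ι ι ℝ :=
  Matrix.of fun i j => if i = j then g0 i + ∑ j' ∈ univ.erase i, g i j' else -g i j

variable {g : ι → ι → ℝ} {g0 : ι → ℝ}

-- Each row is strictly diagonally dominant, the margin being the grounding conductance.
theorem isUnit_nodalAdmittance (hg : ∀ i j, i ≠ j → 0 ≤ g i j) (hg0 : ∀ i, 0 < g0 i) :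
    IsUnit (nodalAdmittance g g0) := by
  rw [Matrix.isUnit_iff_isUnit_det, isUnit_iff_ne_zero]
  refine det_ne_zero_of_sum_row_lt_diag fun k => ?_
  have hoff : ∑ j ∈ univ.erase k, ‖nodalAdmittance g g0 k j‖ = ∑ j ∈ univ.erase k, g k j := by
    refine sum_congr rfl fun j hj => ?_
    have hkj : k ≠ j := (ne_of_mem_erase hj).symm
    simp [nodalAdmittance, hkj, abs_of_nonneg (hg k j hkj)]
  have hlines : 0 ≤ ∑ j ∈ univ.erase k, g k j :=
    sum_nonneg fun j hj => hg k j (ne_of_mem_erase hj).symm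
  rw [hoff, nodalAdmittance, Matrix.of_apply, if_pos rfl, Real.norm_eq_abs,
    abs_of_pos (by linarith [hg0 k])]
  linarith [hg0 k]

theorem sum_nodalAdmittance_col (hgsym : ∀ i j, i ≠ j → g i j = g j i) (j : ι) :
    ∑ i, nodalAdmittance g g0 i j = g0 j := by
  have hoff : ∑ i ∈ univ.erase j, nodalAdmittance g g0 i j = -∑ i ∈ univ.erase j, g j i := by
    rw [← sum_neg_distrib]
    refine sum_congr rfl fun i hi => ?_
    have hij : i ≠ j := ne_of_mem_erase hi
    simp [nodalAdmittance, hij, hgsym i j hij]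
  rw [← add_sum_erase _ _ (mem_univ j), hoff, nodalAdmittance, Matrix.of_apply, if_pos rfl]
  ring

end NodalAdmittance

section ConstVecMul

open Matrix

theorem const_vecMul {ι R : Type*} [Fintype ι] [NonUnitalNonAssocSemiring R]
    (c : R) (B : Matrix ι ι R) (j : ι) :
    ((fun _ => c) ᵥ* B) j = c * ∑ i, B i j := by
  simp only [vecMul, dotProduct, mul_sum]

-- With positive column sums, `(c, …, c) ⬝ B` has all its entries of the sign of `c`.
theorem const_vecMul_ne_single_sub_single {ι R : Type*} [Fintype ι] [DecidableEq ι]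
    [CommRing R] [LinearOrder R] [IsStrictOrderedRing R]
    {B : Matrix ι ι R} (hB : ∀ j, 0 < ∑ i, B i j) {n m : ι} (hnm : n ≠ m) (c : R) :
    (fun _ => c) ᵥ* B ≠ Pi.single n 1 - Pi.single m 1 := by
  intro h
  have hn := congrFun h n
  have hm := congrFun h m
  rw [const_vecMul] at hn hm
  simp only [Pi.sub_apply, Pi.single_eq_same, Pi.single_eq_of_ne hnm,
    Pi.single_eq_of_ne hnm.symm, sub_zero, zero_sub] at hn hm
  have hc : 0 < c := pos_of_mul_pos_left (hn ▸ one_pos) (hB n).le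
  have hneg : c * ∑ i, B i m < 0 := hm ▸ neg_one_lt_zero
  exact hneg.not_gt (mul_pos hc (hB m))

end ConstVecMul

theorem stmt_7_general (I : ℕ)
    (g : Fin I → Fin I → ℝ) (g0 : Fin I → ℝ)
    (hgsym : ∀ i j, i ≠ j → g i j = g j i)
    (hg : ∀ i j, i ≠ j → 0 ≤ g i j)
    (hg0 : ∀ i, 0 < g0 i)
    (B : Matrix (Fin I) (Fin I) ℝ)
    (hB : ∀ i j, B i j =
      if i = j then g0 i + ∑ j' ∈ Finset.univ.erase i, g i j' else -g i j) :
    IsUnit B ∧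
      ∀ n m : Fin I, n ≠ m →
        ¬ ∃ c : ℝ, Matrix.vecMul (fun _ => c) B
            = (Pi.single n 1 - Pi.single m 1 : Fin I → ℝ) := by
  obtain rfl : B = nodalAdmittance g g0 := Matrix.ext hB
  refine ⟨isUnit_nodalAdmittance hg hg0, fun n m hnm ⟨c, hc⟩ => ?_⟩
  have hcol : ∀ j, 0 < ∑ i, nodalAdmittance g g0 i j := fun j => by
    rw [sum_nodalAdmittance_col hgsym]
    exact hg0 j
  exact const_vecMul_ne_single_sub_single hcol hnm c hc

/-- The nodal admittance matrix `B` of a DC network with nonnegative symmetric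
line conductances `g i j` (for `i ≠ j`) and strictly positive grounding conductances `g0 i`,
given by `B i i = g0 i + ∑_{j ≠ i} g i j` and `B i j = -g i j` for `i ≠ j`, is invertible, and
for all `n ≠ m` no constant row vector `(c, …, c)` satisfies `(c, …, c) ⬝ B = eₙᵀ - eₘᵀ`;
equivalently `(eₙ - eₘ)ᵀ B⁻¹` is never a constant vector. -/
theorem stmt_7 (I : ℕ) (hI : 2 ≤ I)
    (g : Fin I → Fin I → ℝ) (g0 : Fin I → ℝ)
    (hgsym : ∀ i j, i ≠ j → g i j = g j i)
    (hg : ∀ i j, i ≠ j → 0 ≤ g i j)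
    (hg0 : ∀ i, 0 < g0 i)
    (B : Matrix (Fin I) (Fin I) ℝ)
    (hB : ∀ i j, B i j =
      if i = j then g0 i + ∑ j' ∈ Finset.univ.erase i, g i j' else -g i j) :
    IsUnit B ∧
      ∀ n m : Fin I, n ≠ m →
        ¬ ∃ c : ℝ, Matrix.vecMul (fun _ => c) B
            = (Pi.single n 1 - Pi.single m 1 : Fin I → ℝ) :=
  stmt_7_general I g g0 hgsym hg hg0 B hB
end

section
/- Assume the feasible set of the central problem is nonempty and let p̂ be its unique optimal solution. Then for every prosumer i the quantities c_i^k p̂_i^k coincide for all resources k; equivalently, 2 c_i^k p̂_i^k = md_i(p̂_i) := 2(∑_{k'} p̂_i^{k'})/(∑_{k'} 1/c_i^{k'}) for every k. -/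
open Finset

noncomputable section

/-- Data of the energy sharing game: `I` prosumers each with `K` resources, `L` lines,
price-sensitivity `a`, disutility coefficients `c`, required adjustments `D`, line-flow
distribution factors `ptdf`, flow limits `F`, and `P`, the Euclidean projection onto the
feasible set of cleared quantities. -/
structure Sharing where
  I : ℕ
  K : ℕ
  L : ℕ
  a : ℝ
  c : Fin I → Fin K → ℝ
  D : Fin I → ℝ
  ptdf : Fin I → Fin L → ℝ
  F : Fin L → ℝ
  P : (Fin I → ℝ) → (Fin I → ℝ)

namespace Sharing

variable (s : Sharing)

/-- Feasible set of cleared quantities: balance plus line flow limits. -/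
def Y : Set (Fin s.I → ℝ) :=
  {y | ∑ i, y i = 0 ∧ ∀ l, |∑ i, s.ptdf i l * y i| ≤ s.F l}

/-- `y` is the Euclidean projection of `b` onto `s.Y`. -/
def IsProj (b y : Fin s.I → ℝ) : Prop :=
  y ∈ s.Y ∧ ∀ z ∈ s.Y, ∑ i, (b i - y i) ^ 2 ≤ ∑ i, (b i - z i) ^ 2

/-- `s.P` is indeed the Euclidean projection onto `s.Y`. -/
def ProjOK : Prop := ∀ b, s.IsProj b (s.P b)

/-- Clearing price `λ(b) = (b - P_Y b) / a`. -/
def lam (b : Fin s.I → ℝ) (i : Fin s.I) : ℝ := (b i - s.P b i) / s.a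

/-- Cleared quantity `q_i(b) = -a λ_i(b) + b_i`. -/
def qty (b : Fin s.I → ℝ) (i : Fin s.I) : ℝ := -(s.a * s.lam b i) + b i

/-- Disutility of prosumer `i`: `f_i(p) = ∑_k c_i^k (p^k)^2`. -/
def f (i : Fin s.I) (p : Fin s.K → ℝ) : ℝ := ∑ k, s.c i k * p k ^ 2

/-- Marginal disutility `md_i(p) = 2 (∑_k p^k) / (∑_k 1/c_i^k)`. -/
def md (i : Fin s.I) (p : Fin s.K → ℝ) : ℝ := 2 * (∑ k, p k) / ∑ k, 1 / s.c i k

/-- Equilibrium bid `b̃_i(p) = D_i - ∑_k p^k + a (md_i(p) + (∑_k p^k - D_i)/(a(I-1)))`. -/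
def btilde (i : Fin s.I) (p : Fin s.K → ℝ) : ℝ :=
  s.D i - ∑ k, p k + s.a * (s.md i p + ((∑ k, p k) - s.D i) / (s.a * ((s.I : ℝ) - 1)))

/-- Cost of prosumer `i` in the original sharing game: `Π_i = f_i + λ_i q_i`. -/
def cost (i : Fin s.I) (p : Fin s.K → ℝ) (b : Fin s.I → ℝ) : ℝ :=
  s.f i p + s.lam b i * s.qty b i

/-- Regulated cost of prosumer `i` in the improved sharing game:
`Γ_i = f_i + max(λ_i q_i, (md_i - q_i/(a(I-1))) q_i)`. -/
def costImp (i : Fin s.I) (p : Fin s.K → ℝ) (b : Fin s.I → ℝ) : ℝ :=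
  s.f i p + max (s.lam b i * s.qty b i)
    ((s.md i p - s.qty b i / (s.a * ((s.I : ℝ) - 1))) * s.qty b i)

/-- Feasibility of prosumer `i`'s decision: `∑_k p^k + q_i(b) = D_i`. -/
def Feas (i : Fin s.I) (p : Fin s.K → ℝ) (b : Fin s.I → ℝ) : Prop :=
  (∑ k, p k) + s.qty b i = s.D i

/-- `(p, b)` is a generalized Nash equilibrium of the original sharing game. -/
def IsGNE (p : Fin s.I → Fin s.K → ℝ) (b : Fin s.I → ℝ) : Prop :=
  ∀ i, s.Feas i (p i) b ∧
    ∀ (p' : Fin s.K → ℝ) (b' : ℝ), s.Feas i p' (Function.update b i b') →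
      s.cost i (p i) b ≤ s.cost i p' (Function.update b i b')

/-- `b` is an isolated GNE bid profile of the original game: some neighborhood of `b`
contains no other GNE bid profile. -/
def IsolatedBids (b : Fin s.I → ℝ) : Prop :=
  ∃ ε > 0, ∀ (p' : Fin s.I → Fin s.K → ℝ) (b' : Fin s.I → ℝ),
    s.IsGNE p' b' → (∀ j, |b' j - b j| < ε) → b' = b

/-- `(p, b)` is a generalized Nash equilibrium of the improved (price-regulated) game. -/
def IsGNEImp (p : Fin s.I → Fin s.K → ℝ) (b : Fin s.I → ℝ) : Prop :=
  ∀ i, s.Feas i (p i) b ∧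
    ∀ (p' : Fin s.K → ℝ) (b' : ℝ), s.Feas i p' (Function.update b i b') →
      s.costImp i (p i) b ≤ s.costImp i p' (Function.update b i b')

/-- Feasibility for the central problem: `(D_i - ∑_k p_i^k)_i ∈ Y`. -/
def CFeas (p : Fin s.I → Fin s.K → ℝ) : Prop :=
  (fun i => s.D i - ∑ k, p i k) ∈ s.Y

/-- Objective of the central problem. -/
def CObj (p : Fin s.I → Fin s.K → ℝ) : ℝ :=
  ∑ i, ∑ k, s.c i k * p i k ^ 2 +
    ∑ i, (s.D i - ∑ k, p i k) ^ 2 / (2 * s.a * ((s.I : ℝ) - 1))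

/-- `p` is an optimal solution of the central problem. -/
def COpt (p : Fin s.I → Fin s.K → ℝ) : Prop :=
  s.CFeas p ∧ ∀ p', s.CFeas p' → s.CObj p ≤ s.CObj p'

/-- Standing assumptions: `I ≥ 2`, `K ≥ 1`, `a > 0`, `c > 0`, `F ≥ 0`, and `s.P` is the
Euclidean projection onto `s.Y`. -/
def Valid : Prop :=
  2 ≤ s.I ∧ 1 ≤ s.K ∧ 0 < s.a ∧ (∀ i k, 0 < s.c i k) ∧ (∀ l, 0 ≤ s.F l) ∧ s.ProjOK

end Sharing


private lemma sharing_cobj_update (s : Sharing) (p : Fin s.I → Fin s.K → ℝ)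
    (i : Fin s.I) (r : Fin s.K → ℝ) :
    s.CObj (Function.update p i r) =
      s.CObj p + ((∑ j, s.c i j * r j ^ 2) - ∑ j, s.c i j * (p i j) ^ 2)
        + ((s.D i - ∑ j, r j) ^ 2 / (2 * s.a * ((s.I:ℝ)-1))
           - (s.D i - ∑ j, p i j) ^ 2 / (2 * s.a * ((s.I:ℝ)-1))) := by
  unfold Sharing.CObj
  rw [← Finset.add_sum_erase (f := fun i' => ∑ k, s.c i' k * Function.update p i r i' k ^ 2) _ (Finset.mem_univ i),
      ← Finset.add_sum_erase (f := fun i' => (s.D i' - ∑ k, Function.update p i r i' k) ^ 2 / (2 * s.a * ((s.I:ℝ)-1))) _ (Finset.mem_univ i),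
      ← Finset.add_sum_erase (f := fun i' => ∑ k, s.c i' k * p i' k ^ 2) _ (Finset.mem_univ i),
      ← Finset.add_sum_erase (f := fun i' => (s.D i' - ∑ k, p i' k) ^ 2 / (2 * s.a * ((s.I:ℝ)-1))) _ (Finset.mem_univ i)]
  have h1 : ∀ i' ∈ Finset.univ.erase i, (∑ k, s.c i' k * Function.update p i r i' k ^ 2)
      = ∑ k, s.c i' k * p i' k ^ 2 := by
    intro i' hi'
    rw [Function.update_of_ne (Finset.ne_of_mem_erase hi')]
  have h2 : ∀ i' ∈ Finset.univ.erase i, (s.D i' - ∑ k, Function.update p i r i' k) ^ 2 / (2 * s.a * ((s.I:ℝ)-1))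
      = (s.D i' - ∑ k, p i' k) ^ 2 / (2 * s.a * ((s.I:ℝ)-1)) := by
    intro i' hi'
    rw [Function.update_of_ne (Finset.ne_of_mem_erase hi')]
  rw [Finset.sum_congr rfl h1, Finset.sum_congr rfl h2]
  simp only [Function.update_self]
  ring

/-- At the unique optimal solution `p̂` of the central problem, each prosumer
equalizes the marginal disutilities of its resources: the quantities `c_i^k p̂_i^k` coincide for
all `k`; equivalently `2 c_i^k p̂_i^k = md_i(p̂_i)` for every `k`. -/
theorem stmt_8 (s : Sharing) (hs : s.Valid)
    (hne : ∃ p, s.CFeas p)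
    (phat : Fin s.I → Fin s.K → ℝ) (hopt : s.COpt phat) :
    ∀ i, (∀ k k', s.c i k * phat i k = s.c i k' * phat i k') ∧
      ∀ k, 2 * (s.c i k * phat i k) = s.md i (phat i) := by
  obtain ⟨hI, hK, ha, hc, hF, hP⟩ := hs
  intro i
  have hchat : ∀ k k', s.c i k * phat i k = s.c i k' * phat i k' := by
    intro k k'
    by_cases hkk : k = k'
    · rw [hkk]
    · -- perturbation argument
      set A : ℝ := 2 * (s.c i k * phat i k - s.c i k' * phat i k') with hA
      set B : ℝ := s.c i k + s.c i k' with hB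
      have hBpos : 0 < B := add_pos (hc i k) (hc i k')
      have key : ∀ ε : ℝ, 0 ≤ ε * A + ε ^ 2 * B := by
        intro ε
        set d : Fin s.K → ℝ := fun j => (if j = k then ε else 0) + (if j = k' then -ε else 0) with hd
        set r : Fin s.K → ℝ := fun j => phat i j + d j with hr
        have hdsum : ∑ j, d j = 0 := by
          simp [hd, Finset.sum_add_distrib, Finset.sum_ite_eq']
        have hrsum : ∑ j, r j = ∑ j, phat i j := by
          simp [hr, Finset.sum_add_distrib, hdsum]
        have hfeas : s.CFeas (Function.update phat i r) := by
          have : (fun i' => s.D i' - ∑ j, Function.update phat i r i' j)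
              = fun i' => s.D i' - ∑ j, phat i' j := by
            funext i'
            by_cases hi' : i' = i
            · subst hi'; rw [Function.update_self, hrsum]
            · rw [Function.update_of_ne hi']
          unfold Sharing.CFeas
          rw [this]
          exact hopt.1
        have hle := hopt.2 _ hfeas
        rw [sharing_cobj_update, hrsum] at hle
        have hsq : ∀ j, s.c i j * r j ^ 2
            = s.c i j * phat i j ^ 2
              + ((if j = k then 2 * s.c i k * phat i k * ε + s.c i k * ε ^ 2 else 0)
                + (if j = k' then -(2 * s.c i k' * phat i k' * ε) + s.c i k' * ε ^ 2 else 0)) := by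
          intro j
          by_cases h1 : j = k
          · subst h1
            simp [hr, hd, hkk]
            ring
          · by_cases h2 : j = k'
            · subst h2
              simp [hr, hd, h1]
              ring
            · simp [hr, hd, h1, h2]
        have hsum2 : (∑ j, s.c i j * r j ^ 2)
            = (∑ j, s.c i j * phat i j ^ 2) + (ε * A + ε ^ 2 * B) := by
          rw [Finset.sum_congr rfl (fun j _ => hsq j)]
          rw [Finset.sum_add_distrib, Finset.sum_add_distrib,
              Finset.sum_ite_eq' Finset.univ k, Finset.sum_ite_eq' Finset.univ k']
          simp only [Finset.mem_univ, if_pos]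
          rw [hA, hB]
          ring
        rw [hsum2] at hle
        nlinarith [hle]
      have h0 := key (-A / (2 * B))
      have hB0 : B ≠ 0 := ne_of_gt hBpos
      have h0' : 0 ≤ -(A ^ 2) / (4 * B) := by
        have : -A / (2 * B) * A + (-A / (2 * B)) ^ 2 * B = -(A ^ 2) / (4 * B) := by
          field_simp
          ring
        linarith [this ▸ h0]
      have hAsq : A ^ 2 ≤ 0 := by
        rw [div_nonneg_iff] at h0'
        rcases h0' with ⟨h, _⟩ | ⟨h, h'⟩
        · linarith
        · linarith
      have : A = 0 := by nlinarith [sq_nonneg A]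
      rw [hA] at this
      linarith
  refine ⟨hchat, fun k => ?_⟩
  have hne' : Nonempty (Fin s.K) := ⟨⟨0, hK⟩⟩
  have hcinv : 0 < ∑ j, 1 / s.c i j :=
    Finset.sum_pos (fun j _ => by simpa using one_div_pos.mpr (hc i j)) Finset.univ_nonempty
  have hsum : ∑ j, phat i j = (s.c i k * phat i k) * ∑ j, 1 / s.c i j := by
    rw [Finset.mul_sum]
    refine Finset.sum_congr rfl (fun j _ => ?_)
    have h := hchat k j
    have hcj := (hc i j).ne'
    field_simp
    linarith
  unfold Sharing.md
  rw [hsum]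
  field_simp
end
end

section
/- Let (p̂, b̂) be the unique GNE of the improved sharing game (p̂ the unique solution of the central problem, b̂_i = b̃_i(p̂_i)). Then every prosumer is individually rational: for every i, Γ_i(p̂_i, b̂) ≤ D_i² / (∑_k 1/c_i^k); that is, each prosumer's total cost at the equilibrium is at most its minimal disutility under individual decision-making (minimizing f_i(p_i) over ∑_k p_i^k = D_i), so sharing achieves a Pareto improvement. -/
open Finset

noncomputable section

lemma aux_theta (L Q : ℝ) (hQ : 0 ≤ Q)
    (h : ∀ θ : ℝ, 0 < θ → θ ≤ 1 → 0 ≤ θ * L + θ^2 * Q) : 0 ≤ L := by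
  by_contra hL
  push_neg at hL
  have hQ1 : (0:ℝ) < Q + 1 := by linarith
  have hθpos : 0 < -L / (Q + 1) := div_pos (by linarith) hQ1
  set θ := min 1 (-L / (Q + 1)) with hθdef
  have h1 : 0 < θ := lt_min one_pos hθpos
  have h2 : θ ≤ 1 := min_le_left _ _
  have h3 := h θ h1 h2
  have h4 : θ ≤ -L / (Q + 1) := min_le_right _ _
  have h5 : θ * (Q + 1) ≤ -L := by
    rw [le_div_iff₀ hQ1] at h4
    linarith
  nlinarith [mul_pos h1 h1]


lemma aux_sum_div {K : ℕ} (c : Fin K → ℝ) (hc : ∀ k, 0 < c k) [Nonempty (Fin K)] (x : ℝ) :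
    ∑ k, x / (c k * ∑ j, 1 / c j) = x := by
  have hS : 0 < ∑ j, 1 / c j :=
    Finset.sum_pos (fun j _ => by have := hc j; positivity) Finset.univ_nonempty
  have h1 : ∀ k : Fin K, x / (c k * ∑ j, 1 / c j) = (1 / c k) * (x / ∑ j, 1 / c j) := by
    intro k
    have := (hc k).ne'
    field_simp
  rw [Finset.sum_congr rfl fun k _ => h1 k, ← Finset.sum_mul]
  field_simp

lemma aux_sum_sq {K : ℕ} (c : Fin K → ℝ) (hc : ∀ k, 0 < c k) [Nonempty (Fin K)] (x : ℝ) :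
    ∑ k, c k * (x / (c k * ∑ j, 1 / c j)) ^ 2 = x ^ 2 / ∑ j, 1 / c j := by
  have hS : 0 < ∑ j, 1 / c j :=
    Finset.sum_pos (fun j _ => by have := hc j; positivity) Finset.univ_nonempty
  have h1 : ∀ k : Fin K, c k * (x / (c k * ∑ j, 1 / c j)) ^ 2
      = (1 / c k) * (x ^ 2 / (∑ j, 1 / c j) ^ 2) := by
    intro k
    have := (hc k).ne'
    field_simp
  rw [Finset.sum_congr rfl fun k _ => h1 k, ← Finset.sum_mul]
  field_simp

lemma aux_cs {K : ℕ} (c : Fin K → ℝ) (hc : ∀ k, 0 < c k) [Nonempty (Fin K)] (p : Fin K → ℝ) :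
    (∑ k, p k) ^ 2 / (∑ j, 1 / c j) ≤ ∑ k, c k * p k ^ 2 := by
  have hS : 0 < ∑ j, 1 / c j :=
    Finset.sum_pos (fun j _ => by have := hc j; positivity) Finset.univ_nonempty
  rw [div_le_iff₀ hS]
  have key := Finset.sum_mul_sq_le_sq_mul_sq Finset.univ
    (fun k => Real.sqrt (c k) * p k) (fun k => 1 / Real.sqrt (c k))
  have e1 : ∀ k : Fin K, (Real.sqrt (c k) * p k) * (1 / Real.sqrt (c k)) = p k := by
    intro k
    have h0 : Real.sqrt (c k) ≠ 0 := by
      have := Real.sqrt_pos.mpr (hc k); linarith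
    field_simp
  have e2 : ∀ k : Fin K, (Real.sqrt (c k) * p k) ^ 2 = c k * p k ^ 2 := by
    intro k
    rw [mul_pow, Real.sq_sqrt (hc k).le]
  have e3 : ∀ k : Fin K, (1 / Real.sqrt (c k)) ^ 2 = 1 / c k := by
    intro k
    rw [div_pow, one_pow, Real.sq_sqrt (hc k).le]
  rw [Finset.sum_congr rfl fun k _ => e1 k, Finset.sum_congr rfl fun k _ => e2 k,
    Finset.sum_congr rfl fun k _ => e3 k] at key
  exact key

lemma Y_segment (s : Sharing) {y z : Fin s.I → ℝ} (hy : y ∈ s.Y) (hz : z ∈ s.Y)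
    {θ : ℝ} (h0 : 0 ≤ θ) (h1 : θ ≤ 1) : (fun i => y i + θ * (z i - y i)) ∈ s.Y := by
  obtain ⟨hy1, hy2⟩ := hy
  obtain ⟨hz1, hz2⟩ := hz
  constructor
  · have : ∑ i, (y i + θ * (z i - y i)) = ∑ i, y i + θ * (∑ i, z i - ∑ i, y i) := by
      rw [Finset.sum_add_distrib, ← Finset.mul_sum, Finset.sum_sub_distrib]
    rw [this, hy1, hz1]; ring
  · intro l
    have key : ∑ i, s.ptdf i l * (y i + θ * (z i - y i))
        = (1 - θ) * ∑ i, s.ptdf i l * y i + θ * ∑ i, s.ptdf i l * z i := by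
      rw [Finset.mul_sum, Finset.mul_sum, ← Finset.sum_add_distrib]
      exact Finset.sum_congr rfl fun i _ => by ring
    rw [key]
    calc |(1 - θ) * ∑ i, s.ptdf i l * y i + θ * ∑ i, s.ptdf i l * z i|
        ≤ |(1 - θ) * ∑ i, s.ptdf i l * y i| + |θ * ∑ i, s.ptdf i l * z i| := abs_add_le _ _
      _ = (1 - θ) * |∑ i, s.ptdf i l * y i| + θ * |∑ i, s.ptdf i l * z i| := by
          rw [abs_mul, abs_mul, abs_of_nonneg (by linarith : (0:ℝ) ≤ 1 - θ), abs_of_nonneg h0]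
      _ ≤ (1 - θ) * s.F l + θ * s.F l := by
          have hyl := hy2 l; have hzl := hz2 l
          nlinarith [abs_nonneg (∑ i, s.ptdf i l * y i), abs_nonneg (∑ i, s.ptdf i l * z i)]
      _ = s.F l := by ring


/-- Individual rationality at the unique GNE `(p̂, b̂)` of the improved
sharing game: each prosumer's total cost is at most its minimal disutility
`D_i^2 / (∑_k 1/c_i^k)` under individual decision-making, so sharing yields a Pareto
improvement. -/
theorem stmt_10 (s : Sharing) (hs : s.Valid)
    (hne : ∃ p, s.CFeas p)
    (phat : Fin s.I → Fin s.K → ℝ) (hopt : s.COpt phat)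
    (huniq : ∀ p, s.COpt p → p = phat) :
    ∀ i, s.costImp i (phat i) (fun j => s.btilde j (phat j)) ≤
      s.D i ^ 2 / ∑ k, 1 / s.c i k := by
  intro i0
  obtain ⟨hI, hK, ha, hc, hF, hprojOK⟩ := hs
  haveI hKne : Nonempty (Fin s.K) := ⟨⟨0, hK⟩⟩
  have hIcast : (2:ℝ) ≤ (s.I:ℝ) := by exact_mod_cast hI
  have hI1 : (0:ℝ) < (s.I:ℝ) - 1 := by linarith
  have hI1' : ((s.I:ℝ) - 1) ≠ 0 := ne_of_gt hI1
  have ha' : s.a ≠ 0 := ne_of_gt ha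
  have hSpos : ∀ i, 0 < ∑ j, 1 / s.c i j := fun i =>
    Finset.sum_pos (fun j _ => by have := hc i j; positivity) Finset.univ_nonempty
  set t : Fin s.I → ℝ := fun i => ∑ k, phat i k with htdef
  set q : Fin s.I → ℝ := fun i => s.D i - t i with hqdef
  set b : Fin s.I → ℝ := fun j => s.btilde j (phat j) with hbdef
  -- Step A: equalized marginal disutilities
  have hA : phat = fun i k => t i / (s.c i k * ∑ j, 1 / s.c i j) := by
    refine (huniq _ ?_).symm
    constructor
    · have e : (fun i => s.D i - ∑ k, t i / (s.c i k * ∑ j, 1 / s.c i j))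
          = fun i => s.D i - ∑ k, phat i k := by
        funext i; rw [aux_sum_div (s.c i) (hc i)]
      rw [Sharing.CFeas, e]
      exact hopt.1
    · intro p'' h''
      refine le_trans ?_ (hopt.2 p'' h'')
      unfold Sharing.CObj
      apply add_le_add
      · apply Finset.sum_le_sum
        intro i _
        rw [aux_sum_sq (s.c i) (hc i)]
        exact aux_cs (s.c i) (hc i) (phat i)
      · apply le_of_eq
        apply Finset.sum_congr rfl
        intro i _
        rw [aux_sum_div (s.c i) (hc i)]
  have hAik : ∀ i k, phat i k = t i / (s.c i k * ∑ j, 1 / s.c i j) := by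
    intro i k
    exact congrFun (congrFun hA i) k
  have hfsum : ∀ i, (∑ k, s.c i k * phat i k ^ 2) = t i ^ 2 / ∑ j, 1 / s.c i j := by
    intro i
    calc ∑ k, s.c i k * phat i k ^ 2
        = ∑ k, s.c i k * (t i / (s.c i k * ∑ j, 1 / s.c i j)) ^ 2 :=
          Finset.sum_congr rfl fun k _ => by rw [hAik i k]
      _ = t i ^ 2 / ∑ j, 1 / s.c i j := aux_sum_sq (s.c i) (hc i) (t i)
  have hmd : ∀ i, s.md i (phat i) = 2 * t i / ∑ j, 1 / s.c i j := fun i => rfl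
  have hqY : q ∈ s.Y := hopt.1
  have hqi : ∀ i, q i = s.D i - t i := fun i => rfl
  have hb : ∀ i, b i = q i + s.a * (2 * t i / ∑ j, 1 / s.c i j) - q i / ((s.I:ℝ) - 1) := by
    intro i
    show s.btilde i (phat i) = _
    unfold Sharing.btilde
    rw [hmd i, show (∑ k, phat i k) = t i from rfl, hqi i]
    field_simp
    ring
  -- variational inequality
  have hVI : ∀ z ∈ s.Y, ∑ i, (b i - q i) * (z i - q i) ≤ 0 := by
    intro z hz
    set Lv : ℝ := ∑ i, (-(2 * t i / ∑ j, 1 / s.c i j) + q i / (s.a * ((s.I:ℝ) - 1)))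
      * (z i - q i) with hLdef
    set Qv : ℝ := ∑ i, (z i - q i) ^ 2 * (1 / (∑ j, 1 / s.c i j)
      + 1 / (2 * s.a * ((s.I:ℝ) - 1))) with hQdef
    have hQnn : 0 ≤ Qv := Finset.sum_nonneg fun i _ => by
      have h1 := hSpos i
      positivity
    have hLnn : 0 ≤ Lv := by
      apply aux_theta Lv Qv hQnn
      intro θ hθ0 hθ1
      have hfe : s.CFeas (fun i k =>
          (s.D i - (q i + θ * (z i - q i))) / (s.c i k * ∑ j, 1 / s.c i j)) := by
        have e : (fun i => s.D i - ∑ k,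
            (s.D i - (q i + θ * (z i - q i))) / (s.c i k * ∑ j, 1 / s.c i j))
            = fun i => q i + θ * (z i - q i) := by
          funext i; rw [aux_sum_div (s.c i) (hc i)]; ring
        rw [Sharing.CFeas, e]
        exact Y_segment s hqY hz hθ0.le hθ1
      have hobj := hopt.2 _ hfe
      unfold Sharing.CObj at hobj
      rw [Finset.sum_congr rfl fun (i : Fin s.I) _ => hfsum i] at hobj
      rw [Finset.sum_congr rfl fun (i : Fin s.I) _ =>
        show (s.D i - ∑ k, phat i k) ^ 2 / (2 * s.a * ((s.I:ℝ) - 1))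
          = q i ^ 2 / (2 * s.a * ((s.I:ℝ) - 1)) from rfl] at hobj
      rw [Finset.sum_congr rfl fun (i : Fin s.I) _ =>
        aux_sum_sq (s.c i) (hc i) (s.D i - (q i + θ * (z i - q i)))] at hobj
      rw [Finset.sum_congr rfl fun (i : Fin s.I) _ =>
        show (s.D i - ∑ k, (s.D i - (q i + θ * (z i - q i)))
            / (s.c i k * ∑ j, 1 / s.c i j)) ^ 2 / (2 * s.a * ((s.I:ℝ) - 1))
          = (q i + θ * (z i - q i)) ^ 2 / (2 * s.a * ((s.I:ℝ) - 1)) by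
            rw [aux_sum_div (s.c i) (hc i)]; ring_nf] at hobj
      have expand : θ * Lv + θ ^ 2 * Qv =
          (∑ i, (s.D i - (q i + θ * (z i - q i))) ^ 2 / (∑ j, 1 / s.c i j)
            + ∑ i, (q i + θ * (z i - q i)) ^ 2 / (2 * s.a * ((s.I:ℝ) - 1)))
          - (∑ i, t i ^ 2 / (∑ j, 1 / s.c i j)
            + ∑ i, q i ^ 2 / (2 * s.a * ((s.I:ℝ) - 1))) := by
        rw [hLdef, hQdef, Finset.mul_sum, Finset.mul_sum,
          ← Finset.sum_add_distrib, ← Finset.sum_add_distrib, ← Finset.sum_add_distrib,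
          ← Finset.sum_sub_distrib]
        apply Finset.sum_congr rfl
        intro i _
        have hS0 : (∑ j, 1 / s.c i j) ≠ 0 := (hSpos i).ne'
        rw [hqi i]
        field_simp
        ring
      rw [expand]
      linarith
    have e2 : ∑ i, (b i - q i) * (z i - q i) = -s.a * Lv := by
      rw [hLdef, Finset.mul_sum]
      apply Finset.sum_congr rfl
      intro i _
      rw [hb i]
      field_simp
      ring
    rw [e2]
    nlinarith
  -- projection identification
  have hPb : s.P b = q := by
    obtain ⟨hPY, hPmin⟩ := hprojOK b
    have hqmin : ∀ z ∈ s.Y, ∑ i, (b i - q i) ^ 2 ≤ ∑ i, (b i - z i) ^ 2 := by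
      intro z hz
      have h1 := hVI z hz
      have key : ∑ i, (b i - z i) ^ 2
          = ∑ i, ((b i - q i) ^ 2 - 2 * ((b i - q i) * (z i - q i)) + (z i - q i) ^ 2) :=
        Finset.sum_congr rfl fun i _ => by ring
      rw [key, Finset.sum_add_distrib, Finset.sum_sub_distrib]
      have h2 : 0 ≤ ∑ i, (z i - q i) ^ 2 := Finset.sum_nonneg fun i _ => sq_nonneg _
      have h3 : ∑ i, 2 * ((b i - q i) * (z i - q i))
          = 2 * ∑ i, (b i - q i) * (z i - q i) := by rw [Finset.mul_sum]
      rw [h3]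
      linarith
    have hE : ∑ i, (b i - s.P b i) ^ 2 = ∑ i, (b i - q i) ^ 2 :=
      le_antisymm (hPmin q hqY) (hqmin _ hPY)
    have hmY : (fun i => s.P b i + (1/2 : ℝ) * (q i - s.P b i)) ∈ s.Y :=
      Y_segment s hPY hqY (by norm_num) (by norm_num)
    have h4 := hPmin _ hmY
    have h5 : ∑ i, (b i - (s.P b i + (1/2 : ℝ) * (q i - s.P b i))) ^ 2
        = ∑ i, ((b i - s.P b i) ^ 2 / 2 + (b i - q i) ^ 2 / 2
          - ((q i - s.P b i) / 2) ^ 2) :=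
      Finset.sum_congr rfl fun i _ => by ring
    rw [h5, Finset.sum_sub_distrib, Finset.sum_add_distrib] at h4
    rw [← Finset.sum_div, ← Finset.sum_div] at h4
    have h6 : ∑ i, ((q i - s.P b i) / 2) ^ 2 ≤ 0 := by linarith
    have h7 : ∀ i, ((q i - s.P b i) / 2) ^ 2 = 0 := by
      intro i
      have hnn : ∀ j ∈ Finset.univ, (0:ℝ) ≤ ((q j - s.P b j) / 2) ^ 2 :=
        fun j _ => sq_nonneg _
      exact (Finset.sum_eq_zero_iff_of_nonneg hnn).mp
        (le_antisymm h6 (Finset.sum_nonneg hnn)) i (Finset.mem_univ i)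
    funext i
    have h8 := sq_eq_zero_iff.mp (h7 i)
    have h9 : q i - s.P b i = 0 := by
      rcases div_eq_zero_iff.mp h8 with h | h
      · exact h
      · norm_num at h
    linarith
  -- compute lam and qty at the equilibrium bids
  have hlam : ∀ i, s.lam b i
      = 2 * t i / (∑ j, 1 / s.c i j) - q i / (s.a * ((s.I:ℝ) - 1)) := by
    intro i
    unfold Sharing.lam
    rw [hPb, hb i]
    field_simp
    ring
  have hqty : ∀ i, s.qty b i = q i := by
    intro i
    unfold Sharing.qty
    rw [hlam i, hb i]
    field_simp
    ring
  -- final computation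
  unfold Sharing.costImp Sharing.f
  rw [hqty i0, hlam i0, hmd i0, hfsum i0, max_self]
  rw [hqi i0]
  have hS := hSpos i0
  have hS0 : (∑ j, 1 / s.c i0 j) ≠ 0 := hS.ne'
  have h1 : 0 ≤ (s.D i0 - t i0) ^ 2 / (∑ j, 1 / s.c i0 j) :=
    div_nonneg (sq_nonneg _) hS.le
  have h2 : 0 ≤ (s.D i0 - t i0) ^ 2 / (s.a * ((s.I:ℝ) - 1)) :=
    div_nonneg (sq_nonneg _) (mul_nonneg ha.le hI1.le)
  have expand : s.D i0 ^ 2 / (∑ j, 1 / s.c i0 j)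
      = t i0 ^ 2 / (∑ j, 1 / s.c i0 j)
        + (2 * t i0 / (∑ j, 1 / s.c i0 j)
          - (s.D i0 - t i0) / (s.a * ((s.I:ℝ) - 1))) * (s.D i0 - t i0)
        + (s.D i0 - t i0) ^ 2 / (∑ j, 1 / s.c i0 j)
        + (s.D i0 - t i0) ^ 2 / (s.a * ((s.I:ℝ) - 1)) := by
    field_simp
    ring
  linarith
end
end

section
/- Assume the feasible set of the central problem is nonempty, let p̂ be its unique optimal solution and b̂_i := b̃_i(p̂_i) the unique GNE bids of the improved game. Then there exist KKT multipliers κ ∈ ℝ and τ_l^−, τ_l^+ ≥ 0 (l = 1,…,L) such that: (i) 2c_i^k p̂_i^k + (∑_k p̂_i^k − D_i)/(a(I−1)) + κ + ∑_l π_{il} τ_l^− − ∑_l π_{il} τ_l^+ = 0 for all i, k; (ii) τ_l^−·(F_l + ∑_i π_{il}(D_i − ∑_k p̂_i^k)) = 0 and τ_l^+·(F_l − ∑_i π_{il}(D_i − ∑_k p̂_i^k)) = 0 for all l; and (iii) the equilibrium clearing prices satisfy λ_i(b̂) = −κ − ∑_l π_{il} τ_l^− + ∑_l π_{il} τ_l^+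 for every i. Moreover λ_i(b̂) = md_i(p̂_i) − q_i(b̂)/(a(I−1)), so the regulated price λ_i^c coincides with the clearing price λ_i(b̂). -/
open Finset

noncomputable section

theorem myFarkas {α ι : Type*} [Fintype α] (T : Finset ι) :
    ∀ (v : ι → α → ℝ) (c : α → ℝ),
    (∀ d : α → ℝ, (∀ j ∈ T, ∑ a, v j a * d a ≤ 0) → ∑ a, c a * d a ≤ 0) →
    ∃ μ : ι → ℝ, (∀ j, 0 ≤ μ j) ∧ (∀ j ∉ T, μ j = 0) ∧
      ∀ a, c a = ∑ j ∈ T, μ j * v j a := by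
  classical
  induction T using Finset.induction_on with
  | empty =>
    intro v c h
    have hc := h c (by simp)
    have hz : ∀ a, c a = 0 := by
      intro a
      have hnn : ∀ b : α, (0:ℝ) ≤ c b * c b := fun b => mul_self_nonneg _
      have hge : (0:ℝ) ≤ ∑ b, c b * c b := Finset.sum_nonneg (fun b _ => hnn b)
      have h0 : ∑ b, c b * c b = 0 := le_antisymm hc hge
      have := (Finset.sum_eq_zero_iff_of_nonneg (fun b _ => hnn b)).1 h0 a (mem_univ a)
      nlinarith [this]
    exact ⟨0, fun j => le_rfl, fun j _ => rfl, fun a => by simp [hz a]⟩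
  | @insert u Scomp huS ih =>
    intro v c h
    by_cases hcase : ∀ d : α → ℝ, (∀ j ∈ Scomp, ∑ a, v j a * d a ≤ 0) → ∑ a, c a * d a ≤ 0
    · obtain ⟨μ, hμ0, hμz, hμc⟩ := ih v c hcase
      refine ⟨μ, hμ0, fun j hj => hμz j (fun hjS => hj (mem_insert_of_mem hjS)), fun a => ?_⟩
      rw [Finset.sum_insert huS, hμz u huS, hμc a]
      ring
    · push_neg at hcase
      obtain ⟨d, hd, hcd⟩ := hcase
      have hud : 0 < ∑ a, v u a * d a := by
        by_contra hle
        push_neg at hle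
        have : ∀ j ∈ insert u Scomp, ∑ a, v j a * d a ≤ 0 := by
          intro j hj
          rcases Finset.mem_insert.1 hj with rfl | hj
          · exact hle
          · exact hd j hj
        exact absurd (h d this) (not_le.2 hcd)
      set dud := ∑ a, v u a * d a with hdud
      set v' : ι → α → ℝ := fun j a => v j a - ((∑ b, v j b * d b) / dud) * v u a with hv'
      set c' : α → ℝ := fun a => c a - ((∑ b, c b * d b) / dud) * v u a with hc'
      have key : ∀ (x : α → ℝ) (e : α → ℝ),
          ∑ a, (x a - ((∑ b, x b * d b) / dud) * v u a) * e a
          = ∑ a, x a * (e a - ((∑ b, v u b * e b) / dud) * d a) := by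
        intro x e
        have h1 : ∑ a, (x a - ((∑ b, x b * d b) / dud) * v u a) * e a
            = ∑ a, x a * e a - ((∑ b, x b * d b) / dud) * ∑ a, v u a * e a := by
          rw [Finset.mul_sum, ← Finset.sum_sub_distrib]
          exact Finset.sum_congr rfl fun a _ => by ring
        have h2 : ∑ a, x a * (e a - ((∑ b, v u b * e b) / dud) * d a)
            = ∑ a, x a * e a - ((∑ b, v u b * e b) / dud) * ∑ a, x a * d a := by
          rw [Finset.mul_sum, ← Finset.sum_sub_distrib]
          exact Finset.sum_congr rfl fun a _ => by ring
        rw [h1, h2]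
        ring
      have hprem : ∀ e : α → ℝ, (∀ j ∈ Scomp, ∑ a, v' j a * e a ≤ 0) → ∑ a, c' a * e a ≤ 0 := by
        intro e he
        set e' : α → ℝ := fun a => e a - ((∑ b, v u b * e b) / dud) * d a with he'
        have hue' : ∑ a, v u a * e' a = 0 := by
          have hstep : ∑ a, v u a * e' a
              = ∑ a, v u a * e a - ((∑ b, v u b * e b) / dud) * ∑ a, v u a * d a := by
            simp only [he']
            rw [Finset.mul_sum, ← Finset.sum_sub_distrib]
            exact Finset.sum_congr rfl fun a _ => by ring
          rw [hstep, ← hdud]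
          field_simp
          ring
        have hall : ∀ j ∈ insert u Scomp, ∑ a, v j a * e' a ≤ 0 := by
          intro j hj
          rcases Finset.mem_insert.1 hj with rfl | hj
          · exact le_of_eq hue'
          · have := he j hj
            rw [key (v j) e] at this
            exact this
        have := h e' hall
        rw [← key c e] at this
        exact this
      obtain ⟨μ, hμ0, hμz, hμc⟩ := ih v' c' hprem
      set t : ℝ := ((∑ b, c b * d b) - ∑ j ∈ Scomp, μ j * ∑ b, v j b * d b) / dud with ht
      have ht0 : 0 ≤ t := by
        apply div_nonneg _ (le_of_lt hud)
        have : ∀ j ∈ Scomp, μ j * ∑ b, v j b * d b ≤ 0 :=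
          fun j hj => mul_nonpos_of_nonneg_of_nonpos (hμ0 j) (hd j hj)
        have hsum := Finset.sum_nonpos this
        linarith
      refine ⟨fun j => if j = u then t else μ j, ?_, ?_, ?_⟩
      · intro j
        by_cases hju : j = u
        · simp [hju, ht0]
        · simp [hju, hμ0 j]
      · intro j hj
        have hju : j ≠ u := fun heq => hj (heq ▸ mem_insert_self u Scomp)
        have hjS : j ∉ Scomp := fun hm => hj (mem_insert_of_mem hm)
        simp [hju, hμz j hjS]
      · intro a
        rw [Finset.sum_insert huS]
        simp only [if_pos rfl]
        have hrw : ∑ j ∈ Scomp, (if j = u then t else μ j) * v j a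
            = ∑ j ∈ Scomp, μ j * v j a := by
          apply Finset.sum_congr rfl
          intro j hj
          have : j ≠ u := fun heq => huS (heq ▸ hj)
          simp [this]
        rw [hrw]
        have hca := hμc a
        simp only [hc', hv'] at hca
        have hexp : ∑ j ∈ Scomp, μ j * (v j a - ((∑ b, v j b * d b) / dud) * v u a)
            = ∑ j ∈ Scomp, μ j * v j a
              - (∑ j ∈ Scomp, μ j * ∑ b, v j b * d b) / dud * v u a := by
          have hpt : ∀ j : ι, μ j * (v j a - ((∑ b, v j b * d b) / dud) * v u a)
              = μ j * v j a - (μ j * ∑ b, v j b * d b) / dud * v u a := fun j => by ring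
          simp only [hpt]
          rw [Finset.sum_sub_distrib]
          congr 1
          rw [← Finset.sum_mul, ← Finset.sum_div]
        rw [hexp] at hca
        have hdud0 : dud ≠ 0 := ne_of_gt hud
        rw [if_pos trivial, ht, sub_div, sub_mul]
        linarith [hca]

namespace Sharing
variable (s : Sharing)

theorem Y_conv {y z : Fin s.I → ℝ} (hy : y ∈ s.Y) (hz : z ∈ s.Y) {t : ℝ}
    (h0 : 0 ≤ t) (h1 : t ≤ 1) : (fun i => (1 - t) * y i + t * z i) ∈ s.Y := by
  obtain ⟨hy1, hy2⟩ := hy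
  obtain ⟨hz1, hz2⟩ := hz
  constructor
  · rw [Finset.sum_add_distrib, ← Finset.mul_sum, ← Finset.mul_sum, hy1, hz1]
    ring
  · intro l
    have hrw : ∑ i, s.ptdf i l * ((1 - t) * y i + t * z i)
        = (1 - t) * ∑ i, s.ptdf i l * y i + t * ∑ i, s.ptdf i l * z i := by
      rw [Finset.mul_sum, Finset.mul_sum, ← Finset.sum_add_distrib]
      exact Finset.sum_congr rfl fun i _ => by ring
    rw [hrw]
    have h2 := hy2 l
    have h3 := hz2 l
    rw [abs_le] at h2 h3 ⊢
    constructor <;> nlinarith [h2.1, h2.2, h3.1, h3.2]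

theorem cobj_expand (han : s.a * ((s.I : ℝ) - 1) ≠ 0)
    (p Δ : Fin s.I → Fin s.K → ℝ) (t : ℝ) :
    s.CObj (fun i k => p i k + t * Δ i k)
      = s.CObj p
        + t * (∑ i, ∑ k, (2 * s.c i k * p i k
            + ((∑ k', p i k') - s.D i) / (s.a * ((s.I : ℝ) - 1))) * Δ i k)
        + t ^ 2 * (∑ i, ∑ k, s.c i k * Δ i k ^ 2
            + ∑ i, (∑ k, Δ i k) ^ 2 / (2 * s.a * ((s.I : ℝ) - 1))) := by
  have h1 : ∀ i, ∑ k, s.c i k * (p i k + t * Δ i k) ^ 2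
      = (∑ k, s.c i k * p i k ^ 2) + t * (∑ k, 2 * s.c i k * p i k * Δ i k)
        + t ^ 2 * ∑ k, s.c i k * Δ i k ^ 2 := by
    intro i
    rw [Finset.mul_sum, Finset.mul_sum, ← Finset.sum_add_distrib, ← Finset.sum_add_distrib]
    exact Finset.sum_congr rfl fun k _ => by ring
  have h2 : ∀ i, (s.D i - ∑ k, (p i k + t * Δ i k)) ^ 2 / (2 * s.a * ((s.I : ℝ) - 1))
      = (s.D i - ∑ k, p i k) ^ 2 / (2 * s.a * ((s.I : ℝ) - 1))
        + t * ((((∑ k', p i k') - s.D i) / (s.a * ((s.I : ℝ) - 1))) * ∑ k, Δ i k)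
        + t ^ 2 * ((∑ k, Δ i k) ^ 2 / (2 * s.a * ((s.I : ℝ) - 1))) := by
    intro i
    have hsk : ∑ k, (p i k + t * Δ i k) = (∑ k, p i k) + t * ∑ k, Δ i k := by
      rw [Finset.sum_add_distrib, Finset.mul_sum]
    rw [hsk]
    have ha : s.a ≠ 0 := left_ne_zero_of_mul han
    have hI : ((s.I : ℝ) - 1) ≠ 0 := right_ne_zero_of_mul han
    field_simp
    ring
  have h3 : ∀ i, ∑ k, (2 * s.c i k * p i k
      + ((∑ k', p i k') - s.D i) / (s.a * ((s.I : ℝ) - 1))) * Δ i k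
      = (∑ k, 2 * s.c i k * p i k * Δ i k)
        + (((∑ k', p i k') - s.D i) / (s.a * ((s.I : ℝ) - 1))) * ∑ k, Δ i k := by
    intro i
    rw [Finset.mul_sum, ← Finset.sum_add_distrib]
    exact Finset.sum_congr rfl fun k _ => by ring
  unfold CObj
  rw [Finset.sum_congr rfl fun i _ => h1 i, Finset.sum_congr rfl fun i _ => h2 i,
    Finset.sum_congr rfl fun i _ => h3 i]
  simp only [Finset.sum_add_distrib, ← Finset.mul_sum]
  ring

theorem lin_nonneg (han : s.a * ((s.I : ℝ) - 1) ≠ 0)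
    (phat : Fin s.I → Fin s.K → ℝ) (hopt : s.COpt phat)
    (p' : Fin s.I → Fin s.K → ℝ) (hp' : s.CFeas p') :
    0 ≤ ∑ i, ∑ k, (2 * s.c i k * phat i k
        + ((∑ k', phat i k') - s.D i) / (s.a * ((s.I : ℝ) - 1))) * (p' i k - phat i k) := by
  set Δ : Fin s.I → Fin s.K → ℝ := fun i k => p' i k - phat i k with hΔ
  set Lin : ℝ := ∑ i, ∑ k, (2 * s.c i k * phat i k
      + ((∑ k', phat i k') - s.D i) / (s.a * ((s.I : ℝ) - 1))) * Δ i k with hLin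
  set Quad : ℝ := ∑ i, ∑ k, s.c i k * Δ i k ^ 2
      + ∑ i, (∑ k, Δ i k) ^ 2 / (2 * s.a * ((s.I : ℝ) - 1)) with hQuad
  by_contra hneg
  push_neg at hneg
  set t : ℝ := min 1 (-Lin / (|Quad| + 1)) with ht
  have habs : (0:ℝ) < |Quad| + 1 := by positivity
  have ht0 : 0 < t := by
    apply lt_min one_pos
    apply div_pos (by linarith) habs
  have ht1 : t ≤ 1 := min_le_left _ _
  have htb : t * (|Quad| + 1) ≤ -Lin := by
    have := min_le_right 1 (-Lin / (|Quad| + 1))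
    calc t * (|Quad| + 1) ≤ (-Lin / (|Quad| + 1)) * (|Quad| + 1) := by
          apply mul_le_mul_of_nonneg_right this (le_of_lt habs)
      _ = -Lin := by field_simp
  have hfeas : s.CFeas (fun i k => phat i k + t * Δ i k) := by
    have hy' : (fun i => s.D i - ∑ k, p' i k) ∈ s.Y := hp'
    have hy : (fun i => s.D i - ∑ k, phat i k) ∈ s.Y := hopt.1
    have hmem := s.Y_conv hy hy' (le_of_lt ht0) ht1
    unfold CFeas
    convert hmem using 1
    funext i
    rw [Finset.sum_add_distrib, ← Finset.mul_sum]
    simp only [hΔ]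
    rw [Finset.sum_sub_distrib]
    ring
  have hle := hopt.2 _ hfeas
  rw [s.cobj_expand han phat Δ t] at hle
  rw [← hLin, ← hQuad] at hle
  have hle' : 0 ≤ t * Lin + t ^ 2 * Quad := by linarith
  have hQle : Quad ≤ |Quad| := le_abs_self _
  have h4 : t * Quad ≤ t * |Quad| := mul_le_mul_of_nonneg_left hQle ht0.le
  have h5 : t * Quad ≤ -Lin - t := by nlinarith
  have h6 : t * (t * Quad) ≤ t * (-Lin - t) := mul_le_mul_of_nonneg_left h5 ht0.le
  nlinarith [hle', h6, ht0, sq_nonneg t]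

theorem exists_mult (yh lamh : Fin s.I → ℝ) (hymem : yh ∈ s.Y)
    (hVI : ∀ z ∈ s.Y, ∑ i, lamh i * (z i - yh i) ≤ 0) :
    ∃ (κ : ℝ) (τm τp : Fin s.L → ℝ), (∀ l, 0 ≤ τm l) ∧ (∀ l, 0 ≤ τp l) ∧
      (∀ l, τm l ≠ 0 → ∑ i, s.ptdf i l * yh i = -s.F l) ∧
      (∀ l, τp l ≠ 0 → ∑ i, s.ptdf i l * yh i = s.F l) ∧
      (∀ i, lamh i = -κ - (∑ l, s.ptdf i l * τm l) + ∑ l, s.ptdf i l * τp l) := by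
  classical
  set ι : Type := Bool ⊕ (Fin s.L ⊕ Fin s.L) with hι
  set v : ι → Fin s.I → ℝ := fun j => match j with
    | .inl true => fun _ => 1
    | .inl false => fun _ => -1
    | .inr (.inl l) => fun i => -s.ptdf i l
    | .inr (.inr l) => fun i => s.ptdf i l
    with hv
  set Pr : ι → Prop := fun j => match j with
    | .inl _ => True
    | .inr (.inl l) => ∑ i, s.ptdf i l * yh i = -s.F l
    | .inr (.inr l) => ∑ i, s.ptdf i l * yh i = s.F l
    with hPr
  set T : Finset ι := Finset.univ.filter Pr with hT
  have hyp : ∀ d : Fin s.I → ℝ, (∀ j ∈ T, ∑ i, v j i * d i ≤ 0) → ∑ i, lamh i * d i ≤ 0 := by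
    intro d hd
    have hmemT : ∀ j : ι, Pr j → j ∈ T := by
      intro j hj
      rw [hT, Finset.mem_filter]
      exact ⟨Finset.mem_univ _, hj⟩
    have hd1 : ∑ i, d i ≤ 0 := by
      have := hd (.inl true) (hmemT _ trivial)
      simpa [hv] using this
    have hd2 : ∑ i, -d i ≤ 0 := by
      have := hd (.inl false) (hmemT _ trivial)
      simpa [hv] using this
    have hdsum : ∑ i, d i = 0 := by
      rw [Finset.sum_neg_distrib] at hd2
      linarith
    set g : Fin s.L → ℝ := fun l => ∑ i, s.ptdf i l * d i with hg
    set hh : Fin s.L → ℝ := fun l => ∑ i, s.ptdf i l * yh i with hhh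
    have hgm : ∀ l, hh l = -s.F l → 0 ≤ g l := by
      intro l hl
      have := hd (.inr (.inl l)) (hmemT _ hl)
      have h2 : ∑ i, -(s.ptdf i l * d i) ≤ 0 := by
        convert this using 2 with i
        ring
      rw [Finset.sum_neg_distrib] at h2
      simp only [hg]
      linarith
    have hgp : ∀ l, hh l = s.F l → g l ≤ 0 := by
      intro l hl
      exact hd (.inr (.inr l)) (hmemT _ hl)
    have habs : ∀ l, |hh l| ≤ s.F l := fun l => hymem.2 l
    set f : Fin s.L → ℝ := fun l =>
      min (if 0 < g l then (s.F l - hh l) / g l else 1)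
        (if g l < 0 then (-s.F l - hh l) / g l else 1) with hf
    set Sset : Finset ℝ := insert (1 : ℝ) (Finset.image f Finset.univ) with hSset
    have hSne : Sset.Nonempty := ⟨1, Finset.mem_insert_self _ _⟩
    set ε : ℝ := Sset.min' hSne with hε
    have hfpos : ∀ l, 0 < f l := by
      intro l
      rw [hf]
      apply lt_min
      · by_cases h : 0 < g l
        · rw [if_pos h]
          apply div_pos _ h
          have hne : hh l ≠ s.F l := fun he => absurd (hgp l he) (not_le.2 h)
          have := (abs_le.1 (habs l)).2
          cases' lt_or_eq_of_le this with h' h'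
          · linarith
          · exact absurd h' hne
        · rw [if_neg h]; norm_num
      · by_cases h : g l < 0
        · rw [if_pos h]
          rw [div_pos_iff]
          right
          constructor
          · have hne : hh l ≠ -s.F l := fun he => absurd (hgm l he) (not_le.2 h)
            have := (abs_le.1 (habs l)).1
            cases' lt_or_eq_of_le this with h' h'
            · linarith
            · exact absurd h'.symm hne
          · exact h
        · rw [if_neg h]; norm_num
    have hεpos : 0 < ε := by
      have hmem := Sset.min'_mem hSne
      rw [← hε] at hmem
      rw [hSset, Finset.mem_insert] at hmem
      rcases hmem with h1 | h2
      · rw [h1]; norm_num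
      · obtain ⟨l, _, hl⟩ := Finset.mem_image.1 h2
        rw [← hl]; exact hfpos l
    have hεf : ∀ l, ε ≤ f l := fun l =>
      Finset.min'_le _ _ (Finset.mem_insert_of_mem (Finset.mem_image_of_mem f (Finset.mem_univ l)))
    have hzY : (fun i => yh i + ε * d i) ∈ s.Y := by
      constructor
      · rw [Finset.sum_add_distrib, ← Finset.mul_sum, hymem.1, hdsum]
        ring
      · intro l
        have hrw : ∑ i, s.ptdf i l * (yh i + ε * d i) = hh l + ε * g l := by
          rw [hhh, hg, Finset.mul_sum, ← Finset.sum_add_distrib]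
          exact Finset.sum_congr rfl fun i _ => by ring
        rw [hrw, abs_le]
        have hup : hh l + ε * g l ≤ s.F l := by
          by_cases h : 0 < g l
          · have h1 := hεf l
            simp only [hf] at h1
            have h2 : ε ≤ (s.F l - hh l) / g l := le_trans h1 (by rw [if_pos h]; exact min_le_left _ _)
            rw [le_div_iff₀ h] at h2
            linarith
          · push_neg at h
            have : ε * g l ≤ 0 := mul_nonpos_of_nonneg_of_nonpos hεpos.le h
            have := (abs_le.1 (habs l)).2
            linarith
        have hlo : -s.F l ≤ hh l + ε * g l := by
          by_cases h : g l < 0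
          · have h1 := hεf l
            simp only [hf] at h1
            have h2 : ε ≤ (-s.F l - hh l) / g l := le_trans h1 (by rw [if_pos h]; exact min_le_right _ _)
            rw [le_div_iff_of_neg h] at h2
            linarith
          · push_neg at h
            have : 0 ≤ ε * g l := mul_nonneg hεpos.le h
            have := (abs_le.1 (habs l)).1
            linarith
        exact ⟨hlo, hup⟩
    have hVIz := hVI _ hzY
    have hre : ∑ i, lamh i * (yh i + ε * d i - yh i) = ε * ∑ i, lamh i * d i := by
      rw [Finset.mul_sum]
      exact Finset.sum_congr rfl fun i _ => by ring
    rw [hre] at hVIz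
    nlinarith [hVIz, hεpos]
  obtain ⟨μ, hμ0, hμz, hμc⟩ := myFarkas T v lamh hyp
  refine ⟨μ (.inl false) - μ (.inl true), fun l => μ (.inr (.inl l)), fun l => μ (.inr (.inr l)),
    fun l => hμ0 _, fun l => hμ0 _, ?_, ?_, ?_⟩
  · intro l hl
    have hmem : (Sum.inr (Sum.inl l) : ι) ∈ T := by
      by_contra hnot
      exact hl (hμz _ hnot)
    rw [hT, Finset.mem_filter] at hmem
    exact hmem.2
  · intro l hl
    have hmem : (Sum.inr (Sum.inr l) : ι) ∈ T := by
      by_contra hnot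
      exact hl (hμz _ hnot)
    rw [hT, Finset.mem_filter] at hmem
    exact hmem.2
  · intro i
    have hall : lamh i = ∑ j : ι, μ j * v j i :=
      (hμc i).trans (Finset.sum_subset (Finset.filter_subset _ _)
        (fun j _ hj => by rw [hμz j hj, zero_mul]))
    rw [hall, Fintype.sum_sum_type, Fintype.sum_sum_type, Fintype.sum_bool]
    have e1 : ∑ l, μ (Sum.inr (Sum.inl l)) * v (Sum.inr (Sum.inl l)) i
        = -(∑ l, s.ptdf i l * μ (Sum.inr (Sum.inl l))) := by
      rw [← Finset.sum_neg_distrib]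
      exact Finset.sum_congr rfl fun l _ => by simp [hv]; ring
    have e2 : ∑ l, μ (Sum.inr (Sum.inr l)) * v (Sum.inr (Sum.inr l)) i
        = ∑ l, s.ptdf i l * μ (Sum.inr (Sum.inr l)) := by
      exact Finset.sum_congr rfl fun l _ => by simp [hv]; ring
    rw [e1, e2]
    simp only [hv]
    ring

end Sharing

/-- At the unique GNE `(p̂, b̂)` of the improved game there exist KKT
multipliers `κ, τ⁻ ≥ 0, τ⁺ ≥ 0` satisfying stationarity and complementary slackness for the
central problem, such that the equilibrium clearing price decomposes as a locational marginal
price: `λ_i(b̂) = -κ - ∑_l π_il τ_l⁻ + ∑_l π_il τ_l⁺`. Moreover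
`λ_i(b̂) = md_i(p̂_i) - q_i(b̂)/(a(I-1))`, so the regulated price coincides with the clearing
price. -/
theorem stmt_11 (s : Sharing) (hs : s.Valid)
    (hne : ∃ p, s.CFeas p)
    (phat : Fin s.I → Fin s.K → ℝ) (hopt : s.COpt phat)
    (huniq : ∀ p, s.COpt p → p = phat)
    (bhat : Fin s.I → ℝ) (hbhat : bhat = fun i => s.btilde i (phat i)) :
    (∃ (κ : ℝ) (τm τp : Fin s.L → ℝ),
      (∀ l, 0 ≤ τm l) ∧ (∀ l, 0 ≤ τp l) ∧
      (∀ i k, 2 * s.c i k * phat i k + ((∑ k', phat i k') - s.D i) / (s.a * ((s.I : ℝ) - 1))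
          + κ + ∑ l, s.ptdf i l * τm l - ∑ l, s.ptdf i l * τp l = 0) ∧
      (∀ l, τm l * (s.F l + ∑ i, s.ptdf i l * (s.D i - ∑ k, phat i k)) = 0) ∧
      (∀ l, τp l * (s.F l - ∑ i, s.ptdf i l * (s.D i - ∑ k, phat i k)) = 0) ∧
      (∀ i, s.lam bhat i = -κ - ∑ l, s.ptdf i l * τm l + ∑ l, s.ptdf i l * τp l)) ∧
    (∀ i, s.lam bhat i = s.md i (phat i) - s.qty bhat i / (s.a * ((s.I : ℝ) - 1))) := by
  obtain ⟨hI2, hK1, ha, hc, hF, hproj⟩ := hs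
  have hI2' : (2:ℝ) ≤ (s.I:ℝ) := by exact_mod_cast hI2
  have hn1 : (0:ℝ) < (s.I:ℝ) - 1 := by linarith
  have han : s.a * ((s.I:ℝ) - 1) ≠ 0 := ne_of_gt (mul_pos ha hn1)
  have hKpos : 0 < s.K := hK1
  haveI hKne : Nonempty (Fin s.K) := ⟨⟨0, hKpos⟩⟩
  have hKr : (0:ℝ) < (s.K:ℝ) := by exact_mod_cast hKpos
  set w : Fin s.I → ℝ := fun i => ((∑ k', phat i k') - s.D i) / (s.a * ((s.I:ℝ)-1)) with hw
  set yh : Fin s.I → ℝ := fun i => s.D i - ∑ k, phat i k with hyh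
  set lamh : Fin s.I → ℝ := fun i => s.md i (phat i) + w i with hlamh
  have hymem : yh ∈ s.Y := by rw [hyh]; exact hopt.1
  have hLinA : ∀ p', s.CFeas p' →
      0 ≤ ∑ i, ∑ k, (2 * s.c i k * phat i k + w i) * (p' i k - phat i k) := by
    intro p' hp'
    have := s.lin_nonneg han phat hopt p' hp'
    simp only [hw]
    exact this
  have hcc : ∀ i k k', s.c i k * phat i k = s.c i k' * phat i k' := by
    intro i k k'
    rcases eq_or_ne k k' with rfl | hkk
    · rfl
    have key : ∀ δ : ℝ, 0 ≤ δ * (2 * s.c i k * phat i k) - δ * (2 * s.c i k' * phat i k') := by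
      intro δ
      set Δ : Fin s.I → Fin s.K → ℝ := fun j k'' =>
        if j = i then ((if k'' = k then δ else 0) + (if k'' = k' then -δ else 0)) else 0 with hΔd
      have hΔsum : ∀ j, ∑ k'', Δ j k'' = 0 := by
        intro j
        rcases eq_or_ne j i with rfl | hji
        · simp [hΔd, Finset.sum_add_distrib, Finset.sum_ite_eq', hkk]
        · simp [hΔd, hji]
      have hfeas : s.CFeas (fun j k'' => phat j k'' + Δ j k'') := by
        have heq : (fun j => s.D j - ∑ k'', (phat j k'' + Δ j k''))
            = (fun j => s.D j - ∑ k'', phat j k'') := by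
          funext j
          rw [Finset.sum_add_distrib, hΔsum j]
          ring
        unfold Sharing.CFeas
        rw [heq]
        exact hopt.1
      have h0 := hLinA _ hfeas
      have hsimp : ∑ i', ∑ k'', (2 * s.c i' k'' * phat i' k'' + w i')
            * ((phat i' k'' + Δ i' k'') - phat i' k'')
          = δ * (2 * s.c i k * phat i k) - δ * (2 * s.c i k' * phat i k') := by
        have hint : ∀ i' k'', (2 * s.c i' k'' * phat i' k'' + w i')
            * ((phat i' k'' + Δ i' k'') - phat i' k'')
            = (2 * s.c i' k'' * phat i' k'' + w i') * Δ i' k'' := by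
          intro i' k''; ring
        rw [Finset.sum_congr rfl fun i' _ => Finset.sum_congr rfl fun k'' _ => hint i' k'']
        rw [Finset.sum_eq_single i]
        · have hin : ∀ k'', (2 * s.c i k'' * phat i k'' + w i) * Δ i k''
              = (if k'' = k then (2 * s.c i k'' * phat i k'' + w i) * δ else 0)
                + (if k'' = k' then -((2 * s.c i k'' * phat i k'' + w i) * δ) else 0) := by
            intro k''
            simp only [hΔd, if_pos rfl]
            rcases eq_or_ne k'' k with rfl | h1
            · simp [hkk]
            · rcases eq_or_ne k'' k' with rfl | h2
              · simp [h1]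
              · simp [h1, h2]
          rw [Finset.sum_congr rfl fun k'' _ => hin k'']
          rw [Finset.sum_add_distrib, Finset.sum_ite_eq' Finset.univ k, Finset.sum_ite_eq' Finset.univ k']
          simp only [Finset.mem_univ, if_true]
          ring
        · intro j _ hji
          apply Finset.sum_eq_zero
          intro k'' _
          simp [hΔd, hji]
        · intro h; exact absurd (Finset.mem_univ i) h
      rw [hsimp] at h0
      exact h0
    have h1 := key 1
    have h2 := key (-1)
    linarith
  have hσpos : ∀ i, 0 < ∑ k', 1 / s.c i k' := fun i =>
    Finset.sum_pos (fun k _ => one_div_pos.2 (hc i k)) Finset.univ_nonempty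
  have hB : ∀ i k, 2 * s.c i k * phat i k + w i = lamh i := by
    intro i k
    have hS : (∑ k', phat i k') = s.c i k * phat i k * (∑ k', 1 / s.c i k') := by
      rw [Finset.mul_sum]
      refine Finset.sum_congr rfl fun k' _ => ?_
      have hck' : s.c i k' ≠ 0 := ne_of_gt (hc i k')
      have hcc' := hcc i k k'
      field_simp
      linarith
    have hσ := hσpos i
    simp only [hlamh, Sharing.md]
    rw [hS]
    have hfrac : 2 * (s.c i k * phat i k * (∑ k', 1 / s.c i k')) / (∑ k', 1 / s.c i k')
        = 2 * (s.c i k * phat i k) := by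
      field_simp
    rw [hfrac]
    ring
  have hVI : ∀ z ∈ s.Y, ∑ i, lamh i * (z i - yh i) ≤ 0 := by
    intro z hz
    set p' : Fin s.I → Fin s.K → ℝ := fun i k => phat i k + (yh i - z i) / (s.K:ℝ) with hp'd
    have hfeas : s.CFeas p' := by
      unfold Sharing.CFeas
      have heq : (fun i => s.D i - ∑ k, p' i k) = z := by
        funext i
        have hyi : yh i = s.D i - ∑ k, phat i k := by rw [hyh]
        simp only [hp'd]
        rw [Finset.sum_add_distrib, Finset.sum_const, Finset.card_univ, Fintype.card_fin,
          nsmul_eq_mul]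
        rw [hyi]
        field_simp
        ring
      rw [heq]
      exact hz
    have h0 := hLinA p' hfeas
    have hsimp : ∑ i, ∑ k, (2 * s.c i k * phat i k + w i) * (p' i k - phat i k)
        = ∑ i, lamh i * (yh i - z i) := by
      refine Finset.sum_congr rfl fun i _ => ?_
      have hin : ∀ k : Fin s.K, (2 * s.c i k * phat i k + w i) * (p' i k - phat i k)
          = lamh i * ((yh i - z i) / (s.K:ℝ)) := by
        intro k
        rw [hB i k]
        simp only [hp'd]
        ring
      rw [Finset.sum_congr rfl fun k _ => hin k, Finset.sum_const, Finset.card_univ,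
        Fintype.card_fin, nsmul_eq_mul]
      field_simp
    rw [hsimp] at h0
    have heq2 : ∑ i, lamh i * (z i - yh i) = -∑ i, lamh i * (yh i - z i) := by
      rw [← Finset.sum_neg_distrib]
      exact Finset.sum_congr rfl fun i _ => by ring
    rw [heq2]
    linarith
  have hbh : ∀ i, bhat i = yh i + s.a * lamh i := by
    intro i
    simp only [hbhat, Sharing.btilde, hlamh, hyh, hw]
  have hminy : ∀ z ∈ s.Y, ∑ i, (bhat i - yh i)^2 ≤ ∑ i, (bhat i - z i)^2 := by
    intro z hz
    have hid : ∀ i, (bhat i - z i)^2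
        = (bhat i - yh i)^2 + 2 * s.a * (lamh i * (yh i - z i)) + (yh i - z i)^2 := by
      intro i; rw [hbh i]; ring
    rw [Finset.sum_congr rfl fun i _ => hid i]
    rw [Finset.sum_add_distrib, Finset.sum_add_distrib, ← Finset.mul_sum]
    have h1 : 0 ≤ ∑ i, lamh i * (yh i - z i) := by
      have hv := hVI z hz
      have heq : ∑ i, lamh i * (yh i - z i) = -∑ i, lamh i * (z i - yh i) := by
        rw [← Finset.sum_neg_distrib]
        exact Finset.sum_congr rfl fun i _ => by ring
      rw [heq]
      linarith
    have h2 : 0 ≤ ∑ i, (yh i - z i)^2 := Finset.sum_nonneg fun i _ => sq_nonneg _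
    have h3 : 0 ≤ 2 * s.a * ∑ i, lamh i * (yh i - z i) :=
      mul_nonneg (by linarith) h1
    linarith
  obtain ⟨hPmem, hPmin⟩ := hproj bhat
  have hPy : s.P bhat = yh := by
    have hV1 : ∑ i, (bhat i - s.P bhat i)^2 ≤ ∑ i, (bhat i - yh i)^2 := hPmin yh hymem
    have hV2 : ∑ i, (bhat i - yh i)^2 ≤ ∑ i, (bhat i - s.P bhat i)^2 := hminy _ hPmem
    have hmid := s.Y_conv hymem hPmem (t := 1/2) (by norm_num) (by norm_num)
    have hVm := hPmin _ hmid
    have hid : ∀ i, (bhat i - ((1 - 1/2) * yh i + (1/2) * s.P bhat i))^2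
        = (bhat i - yh i)^2/2 + (bhat i - s.P bhat i)^2/2 - (yh i - s.P bhat i)^2/4 :=
      fun i => by ring
    rw [Finset.sum_congr rfl fun i _ => hid i] at hVm
    have hsplit : ∑ i, ((bhat i - yh i)^2/2 + (bhat i - s.P bhat i)^2/2
          - (yh i - s.P bhat i)^2/4)
        = (∑ i, (bhat i - yh i)^2)/2 + (∑ i, (bhat i - s.P bhat i)^2)/2
          - (∑ i, (yh i - s.P bhat i)^2)/4 := by
      rw [Finset.sum_sub_distrib, Finset.sum_add_distrib, Finset.sum_div, Finset.sum_div,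
        Finset.sum_div]
    rw [hsplit] at hVm
    have hzero : ∑ i, (yh i - s.P bhat i)^2 = 0 :=
      le_antisymm (by linarith) (Finset.sum_nonneg fun i _ => sq_nonneg _)
    funext i
    have hz := (Finset.sum_eq_zero_iff_of_nonneg
      (fun i _ => sq_nonneg (yh i - s.P bhat i))).1 hzero i (Finset.mem_univ i)
    have : yh i - s.P bhat i = 0 := by
      nlinarith [hz, sq_nonneg (yh i - s.P bhat i)]
    linarith
  have hlameq : ∀ i, s.lam bhat i = lamh i := by
    intro i
    unfold Sharing.lam
    rw [hPy, hbh i]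
    field_simp
    ring
  have hqeq : ∀ i, s.qty bhat i = yh i := by
    intro i
    unfold Sharing.qty
    rw [hlameq i, hbh i]
    ring
  obtain ⟨κ, τm, τp, hτm0, hτp0, hτmc, hτpc, hdecomp⟩ := s.exists_mult yh lamh hymem hVI
  have hsyh : ∀ l, ∑ i, s.ptdf i l * (s.D i - ∑ k, phat i k) = ∑ i, s.ptdf i l * yh i :=
    fun l => Finset.sum_congr rfl fun i _ => by rw [hyh]
  refine ⟨⟨κ, τm, τp, hτm0, hτp0, ?_, ?_, ?_, ?_⟩, ?_⟩
  · intro i k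
    have h1 : ((∑ k', phat i k') - s.D i) / (s.a * ((s.I:ℝ) - 1)) = w i := by rw [hw]
    rw [h1]
    have h2 := hB i k
    have h3 := hdecomp i
    linarith
  · intro l
    by_cases hτ : τm l = 0
    · rw [hτ, zero_mul]
    · rw [hsyh l, hτmc l hτ]
      ring
  · intro l
    by_cases hτ : τp l = 0
    · rw [hτ, zero_mul]
    · rw [hsyh l, hτpc l hτ]
      ring
  · intro i
    rw [hlameq i]
    exact hdecomp i
  · intro i
    rw [hlameq i, hqeq i]
    simp only [hlamh, hw, hyh]
    ring
end
end

section
/- In the setting of the previous statement, for any KKT multipliers (κ, τ^−, τ^+) satisfying the stationarity and complementary slackness conditions at p̂, the total sharing payment at the equilibrium satisfies ∑_i λ_i(b̂)·q_i(b̂) = ∑_l F_l (τ_l^− + τ_l^+) ≥ 0; in particular, if every flow-limit constraint is strictly slack at p̂ then ∑_i λ_i(b̂)·q_i(b̂) = 0 (the sharing market is budget balanced), while under congestion the platform collects a nonnegative merchandising surplus. -/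
open Finset

noncomputable section

/-- For any KKT multipliers `(κ, τ⁻, τ⁺)` satisfying stationarity and
complementary slackness at the unique central optimum `p̂`, the total sharing payment at the
equilibrium equals the merchandising surplus `∑_l F_l (τ_l⁻ + τ_l⁺) ≥ 0`; in particular the
market is budget balanced when no flow limit is binding. -/
theorem stmt_12 (s : Sharing) (hs : s.Valid)
    (hne : ∃ p, s.CFeas p)
    (phat : Fin s.I → Fin s.K → ℝ) (hopt : s.COpt phat)
    (huniq : ∀ p, s.COpt p → p = phat)
    (bhat : Fin s.I → ℝ) (hbhat : bhat = fun i => s.btilde i (phat i))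
    (κ : ℝ) (τm τp : Fin s.L → ℝ)
    (hτm : ∀ l, 0 ≤ τm l) (hτp : ∀ l, 0 ≤ τp l)
    (hstat : ∀ i k, 2 * s.c i k * phat i k
        + ((∑ k', phat i k') - s.D i) / (s.a * ((s.I : ℝ) - 1))
        + κ + ∑ l, s.ptdf i l * τm l - ∑ l, s.ptdf i l * τp l = 0)
    (hcsm : ∀ l, τm l * (s.F l + ∑ i, s.ptdf i l * (s.D i - ∑ k, phat i k)) = 0)
    (hcsp : ∀ l, τp l * (s.F l - ∑ i, s.ptdf i l * (s.D i - ∑ k, phat i k)) = 0) :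
    (∑ i, s.lam bhat i * s.qty bhat i = ∑ l, s.F l * (τm l + τp l)) ∧
    (0 ≤ ∑ i, s.lam bhat i * s.qty bhat i) ∧
    ((∀ l, |∑ i, s.ptdf i l * (s.D i - ∑ k, phat i k)| < s.F l) →
      ∑ i, s.lam bhat i * s.qty bhat i = 0) := by
  obtain ⟨hI, hK, ha, hc, hF, hproj⟩ := hs
  have ha' : s.a ≠ 0 := ne_of_gt ha
  set yh : Fin s.I → ℝ := fun i => s.D i - ∑ k, phat i k with hyh
  set lam0 : Fin s.I → ℝ :=
    fun i => -κ - ∑ l, s.ptdf i l * τm l + ∑ l, s.ptdf i l * τp l with hlam0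
  have hyY : yh ∈ s.Y := hopt.1
  have hySy : ∀ l, (∑ i, s.ptdf i l * yh i)
      = ∑ i, s.ptdf i l * (s.D i - ∑ k, phat i k) := fun l =>
    Finset.sum_congr rfl fun i _ => by simp [hyh]
  haveI : Nonempty (Fin s.K) := ⟨⟨0, hK⟩⟩
  have hSpos : ∀ i, 0 < ∑ k, 1 / s.c i k := fun i =>
    Finset.sum_pos (fun k _ => by have := hc i k; positivity) Finset.univ_nonempty
  -- Step 2: md + (∑p - D)/(a(I-1)) = lam0
  have hmd : ∀ i, s.md i (phat i)
      + ((∑ k, phat i k) - s.D i) / (s.a * ((s.I : ℝ) - 1)) = lam0 i := by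
    intro i
    set e := ((∑ k, phat i k) - s.D i) / (s.a * ((s.I : ℝ) - 1)) with he
    have hp : ∀ k, 2 * s.c i k * phat i k = lam0 i - e := by
      intro k
      have h := hstat i k
      simp only [hlam0, ← he] at h ⊢
      linarith
    have hS := hSpos i
    have hsum : 2 * (∑ k, phat i k) = (lam0 i - e) * ∑ k, 1 / s.c i k := by
      rw [Finset.mul_sum, Finset.mul_sum]
      refine Finset.sum_congr rfl fun k _ => ?_
      have hck := hc i k
      have h := hp k
      field_simp
      linarith
    simp only [Sharing.md]
    rw [hsum, mul_div_assoc, div_self (ne_of_gt hS), mul_one]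
    ring
  -- Step 3: bhat = yh + a • lam0
  have hb : ∀ i, bhat i = yh i + s.a * lam0 i := by
    intro i
    rw [hbhat]
    simp only [Sharing.btilde, hyh]
    rw [← hmd i]
  -- algebraic identity for sums against lam0
  have hiden : ∀ (w : Fin s.I → ℝ), ∑ i, lam0 i * w i
      = (∑ l, (τp l - τm l) * (∑ i, s.ptdf i l * w i)) - κ * (∑ i, w i) := by
    intro w
    have step : ∀ i, lam0 i * w i
        = (∑ l, ((τp l - τm l) * (s.ptdf i l * w i))) - κ * w i := by
      intro i
      have h2 : ∑ l, ((τp l - τm l) * (s.ptdf i l * w i))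
          = ((∑ l, s.ptdf i l * τp l) - ∑ l, s.ptdf i l * τm l) * w i := by
        rw [sub_mul, Finset.sum_mul, Finset.sum_mul, ← Finset.sum_sub_distrib]
        exact Finset.sum_congr rfl fun l _ => by ring
      rw [h2]; simp only [hlam0]; ring
    rw [Finset.sum_congr rfl fun i _ => step i]
    rw [Finset.sum_sub_distrib, ← Finset.mul_sum, Finset.sum_comm]
    congr 1
    exact Finset.sum_congr rfl fun l _ => by rw [Finset.mul_sum]
  -- complementary slackness in yh form
  have hcsp' : ∀ l, τp l * (∑ i, s.ptdf i l * yh i) = τp l * s.F l := by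
    intro l
    have h := hcsp l
    rw [mul_sub] at h
    rw [hySy l]; linarith
  have hcsm' : ∀ l, τm l * (∑ i, s.ptdf i l * yh i) = -(τm l * s.F l) := by
    intro l
    have h := hcsm l
    rw [mul_add] at h
    rw [hySy l]; linarith
  -- Step 4: key variational inequality
  have hkey : ∀ z ∈ s.Y, 0 ≤ ∑ i, lam0 i * (yh i - z i) := by
    intro z hz
    have hw := hiden (fun i => yh i - z i)
    have hsz : (∑ i, (yh i - z i)) = 0 := by
      rw [Finset.sum_sub_distrib, hyY.1, hz.1]; ring
    have hsplit : ∀ l, (∑ i, s.ptdf i l * (yh i - z i))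
        = (∑ i, s.ptdf i l * yh i) - ∑ i, s.ptdf i l * z i := by
      intro l
      rw [← Finset.sum_sub_distrib]
      exact Finset.sum_congr rfl fun i _ => by ring
    rw [hw, hsz, mul_zero, sub_zero]
    simp only [hsplit]
    have hterm : ∀ l ∈ Finset.univ, (0:ℝ) ≤ (τp l - τm l)
        * ((∑ i, s.ptdf i l * yh i) - ∑ i, s.ptdf i l * z i) := by
      intro l _
      have hzl := abs_le.mp (hz.2 l)
      have h2 : τp l * (∑ i, s.ptdf i l * z i) ≤ τp l * s.F l :=
        mul_le_mul_of_nonneg_left hzl.2 (hτp l)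
      have h3 : τm l * (-s.F l) ≤ τm l * (∑ i, s.ptdf i l * z i) :=
        mul_le_mul_of_nonneg_left hzl.1 (hτm l)
      rw [mul_neg] at h3
      have h4 := hcsp' l
      have h5 := hcsm' l
      have expand : (τp l - τm l)
          * ((∑ i, s.ptdf i l * yh i) - ∑ i, s.ptdf i l * z i)
          = τp l * (∑ i, s.ptdf i l * yh i) - τp l * (∑ i, s.ptdf i l * z i)
            - τm l * (∑ i, s.ptdf i l * yh i) + τm l * (∑ i, s.ptdf i l * z i) := by
        ring
      rw [expand]
      linarith
    have := Finset.sum_nonneg hterm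
    linarith
  -- Step 5: yh is a minimizer of distance to bhat over Y
  have hdist : ∀ z ∈ s.Y, ∑ i, (bhat i - yh i)^2 ≤ ∑ i, (bhat i - z i)^2 := by
    intro z hz
    have hk := hkey z hz
    have hexp : ∑ i, (bhat i - z i)^2
        = ∑ i, (bhat i - yh i)^2 + 2*s.a*(∑ i, lam0 i * (yh i - z i))
          + ∑ i, (yh i - z i)^2 := by
      rw [Finset.mul_sum, ← Finset.sum_add_distrib, ← Finset.sum_add_distrib]
      refine Finset.sum_congr rfl fun i _ => ?_
      rw [hb i]; ring
    have hnn : 0 ≤ ∑ i, (yh i - z i)^2 := Finset.sum_nonneg fun i _ => sq_nonneg _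
    nlinarith [hk, ha.le]
  -- Step 6: the projection equals yh
  have hu := hproj bhat
  have hle1 : ∑ i, (bhat i - s.P bhat i)^2 ≤ ∑ i, (bhat i - yh i)^2 := hu.2 yh hyY
  have hle2 : ∑ i, (bhat i - yh i)^2 ≤ ∑ i, (bhat i - s.P bhat i)^2 := hdist _ hu.1
  have heq : ∑ i, (bhat i - s.P bhat i)^2 = ∑ i, (bhat i - yh i)^2 :=
    le_antisymm hle1 hle2
  have hmY : (fun i => (s.P bhat i + yh i)/2) ∈ s.Y := by
    constructor
    · have h1 := hu.1.1
      have h2 := hyY.1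
      have : (∑ i, (s.P bhat i + yh i)/2)
          = ((∑ i, s.P bhat i) + ∑ i, yh i)/2 := by
        rw [← Finset.sum_add_distrib, Finset.sum_div]
      rw [this, h1, h2]; norm_num
    · intro l
      have h1 := hu.1.2 l
      have h2 := hyY.2 l
      have hsm : ∑ i, s.ptdf i l * ((s.P bhat i + yh i)/2)
          = ((∑ i, s.ptdf i l * s.P bhat i) + ∑ i, s.ptdf i l * yh i)/2 := by
        rw [← Finset.sum_add_distrib, Finset.sum_div]
        exact Finset.sum_congr rfl fun i _ => by ring
      rw [hsm, abs_div, abs_two, div_le_iff₀ (by norm_num : (0:ℝ) < 2)]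
      have h3 := abs_add_le (∑ i, s.ptdf i l * s.P bhat i) (∑ i, s.ptdf i l * yh i)
      linarith
  have hzero : ∀ i, s.P bhat i = yh i := by
    have hdm := hdist _ hmY
    have hmexp : ∑ i, (bhat i - (s.P bhat i + yh i)/2)^2
        = (∑ i, (bhat i - s.P bhat i)^2)/2 + (∑ i, (bhat i - yh i)^2)/2
          - (∑ i, (s.P bhat i - yh i)^2)/4 := by
      rw [Finset.sum_div, Finset.sum_div, Finset.sum_div,
        ← Finset.sum_add_distrib, ← Finset.sum_sub_distrib]
      exact Finset.sum_congr rfl fun i _ => by ring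
    have hsum0 : ∑ i, (s.P bhat i - yh i)^2 ≤ 0 := by linarith
    intro i
    have h0 : ∑ i, (s.P bhat i - yh i)^2 = 0 :=
      le_antisymm hsum0 (Finset.sum_nonneg fun i _ => sq_nonneg _)
    have hterm := (Finset.sum_eq_zero_iff_of_nonneg
      (fun i _ => sq_nonneg (s.P bhat i - yh i))).mp h0 i (Finset.mem_univ i)
    have := sq_eq_zero_iff.mp hterm
    linarith
  -- Step 7: explicit prices and quantities
  have hlami : ∀ i, s.lam bhat i = lam0 i := by
    intro i
    simp only [Sharing.lam, hzero i, hb i]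
    field_simp
    ring
  have hqi : ∀ i, s.qty bhat i = yh i := by
    intro i
    simp only [Sharing.qty, hlami i, hb i]
    ring
  have hmain : ∑ i, s.lam bhat i * s.qty bhat i = ∑ l, s.F l * (τm l + τp l) := by
    have h1 : ∑ i, s.lam bhat i * s.qty bhat i = ∑ i, lam0 i * yh i :=
      Finset.sum_congr rfl fun i _ => by rw [hlami i, hqi i]
    rw [h1, hiden yh, hyY.1, mul_zero, sub_zero]
    refine Finset.sum_congr rfl fun l _ => ?_
    have h4 := hcsp' l
    have h5 := hcsm' l
    have expand : (τp l - τm l) * (∑ i, s.ptdf i l * yh i)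
        = τp l * (∑ i, s.ptdf i l * yh i) - τm l * (∑ i, s.ptdf i l * yh i) := by ring
    rw [expand, h4, h5]; ring
  refine ⟨hmain, ?_, ?_⟩
  · rw [hmain]
    exact Finset.sum_nonneg fun l _ => mul_nonneg (hF l) (add_nonneg (hτm l) (hτp l))
  · intro hstrict
    rw [hmain]
    refine Finset.sum_eq_zero fun l _ => ?_
    have habs := abs_lt.mp (hstrict l)
    have hm0 : τm l = 0 := by
      rcases mul_eq_zero.mp (hcsm l) with h' | h'
      · exact h'
      · exfalso; linarith
    have hp0 : τp l = 0 := by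
      rcases mul_eq_zero.mp (hcsp l) with h' | h'
      · exact h'
      · exfalso; linarith
    rw [hm0, hp0]; ring
end
end
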